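/- arXiv:math/0501233 — 8 statements merged into one kernel-verified Lean document; each statement's English description precedes it below -/
import Mathlib

section
/- Let p and q be coprime natural numbers. Then there exist permutation matrices P_r and P_c of size pq such that P_r · (F_p ⊗ F_q) · P_c = F_{pq}, where F_n denotes the n×n unitary Fourier matrix and ⊗ the Kronecker product. -/
open Matrix

/-- The unitary Fourier matrix of size `n` (0-based indexing):
`[F_n]_{i,j} = (1/√n)·exp(2πi·i·j/n)`. -/
noncomputable def Fourier (n : ℕ) : Matrix (Fin n) (Fin n) ℂ :=
  Matrix.of fun i j =>
    ((1 / Real.sqrt n : ℝ) : ℂ) *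
      Complex.exp (2 * Real.pi * Complex.I * ((i : ℕ) : ℂ) * ((j : ℕ) : ℂ) / n)

/-- Kronecker product of square complex matrices, realized on `Fin (m * n)`. -/
noncomputable def kron {m n : ℕ} (A : Matrix (Fin m) (Fin m) ℂ)
    (B : Matrix (Fin n) (Fin n) ℂ) : Matrix (Fin (m * n)) (Fin (m * n)) ℂ :=
  Matrix.of fun i j =>
    A (finProdFinEquiv.symm i).1 (finProdFinEquiv.symm j).1 *
      B (finProdFinEquiv.symm i).2 (finProdFinEquiv.symm j).2

/-- Kronecker product of row vectors. -/
noncomputable def kronVec {m n : ℕ} (v : Fin m → ℂ) (w : Fin n → ℂ) : Fin (m * n) → ℂ :=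
  fun i => v (finProdFinEquiv.symm i).1 * w (finProdFinEquiv.symm i).2

/-- Kronecker product of the Fourier matrices of the sizes in the list `L`. -/
noncomputable def kronFourier : (L : List ℕ) → Matrix (Fin L.prod) (Fin L.prod) ℂ
  | [] => 1
  | n :: t => kron (Fourier n) (kronFourier t)

open Classical in
/-- `v` is a row of length `N` whose entries are `(1/√N)` times the `n`-th roots of
unity, each occurring `N / n` times. -/
def RowVals (N n : ℕ) (v : Fin N → ℂ) : Prop :=
  ∀ t : Fin n,
    (Finset.univ.filter fun j =>
      v j = ((1 / Real.sqrt N : ℝ) : ℂ) *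
        Complex.exp (2 * Real.pi * Complex.I * ((t : ℕ) : ℂ) / n)).card = N / n

open Classical in
/-- Number of rows of the square matrix `M` that are of "type `n`", i.e. consist of
`(1/√N)` times the `n`-th roots of unity, each occurring equally often. -/
noncomputable def countRows (N n : ℕ) (M : Matrix (Fin N) (Fin N) ℂ) : ℕ :=
  (Finset.univ.filter fun i : Fin N => RowVals N n (M i)).card

/-- `P` is a permutation matrix. -/
def IsPermMatrix {α : Type*} [DecidableEq α] (P : Matrix α α ℂ) : Prop :=
  ∃ σ : Equiv.Perm α, ∀ i j, P i j = if σ j = i then (1 : ℂ) else 0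

/-- `D` is a unitary diagonal matrix. -/
def IsUnitaryDiag {α : Type*} [DecidableEq α] (D : Matrix α α ℂ) : Prop :=
  ∃ d : α → ℂ, (∀ i, ‖d i‖ = 1) ∧ D = Matrix.diagonal d

/-!
Good–Thomas index mapping. Choose `p a + q b = 1` and index the rows of `F_p ⊗ F_q` by
`i ↦ (i mod p, i mod q)` and the columns by `j ↦ (b j mod p, a j mod q)`; since `b` and `a` are
units mod `p` and mod `q`, both maps are bijections of `Fin (p q)` by the Chinese remainder
theorem. The Bézout identity splits `k / (p q) = b k / p + a k / q`, so
`exp (2πi i j / (p q)) = exp (2πi i (b j) / p) · exp (2πi i (a j) / q)`,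
which is exactly the reindexed entry of `F_p ⊗ F_q`.
-/

open scoped Real

lemma isPermMatrix_permMatrix {α : Type*} [DecidableEq α] (σ : Equiv.Perm α) :
    IsPermMatrix (σ.permMatrix ℂ) :=
  ⟨σ.symm, fun i j => by simp [PEquiv.toMatrix_apply, Equiv.eq_symm_apply, eq_comm]⟩

lemma exists_isPermMatrix_mul_mul_eq_of_submatrix_eq {α : Type*} [Fintype α] [DecidableEq α]
    {M N : Matrix α α ℂ} (σ τ : Equiv.Perm α) (h : M.submatrix σ τ = N) :
    ∃ P Q : Matrix α α ℂ, IsPermMatrix P ∧ IsPermMatrix Q ∧ P * M * Q = N :=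
  ⟨σ.permMatrix ℂ, Equiv.Perm.permMatrix ℂ τ.symm, isPermMatrix_permMatrix σ,
    isPermMatrix_permMatrix τ.symm, by
      rw [PEquiv.toMatrix_toPEquiv_mul, PEquiv.mul_toMatrix_toPEquiv, submatrix_submatrix,
        Equiv.symm_symm, Function.comp_id, Function.id_comp, h]⟩

lemma Fourier_apply_eq_toCircle (n : ℕ) [NeZero n] (i j : Fin n) :
    Fourier n i j =
      ((1 / √n : ℝ) : ℂ) * ZMod.toCircle (((i : ℕ) : ZMod n) * ((j : ℕ) : ZMod n)) := by
  rw [← Nat.cast_mul, ZMod.toCircle_natCast, Fourier, of_apply]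
  push_cast
  ring_nf

lemma toCircle_intCast_eq_mul_of_bezout {p q : ℕ} [NeZero p] [NeZero q] {a b : ℤ}
    (hab : p * a + q * b = 1) (k : ℤ) :
    (ZMod.toCircle (k : ZMod (p * q)) : ℂ) =
      ZMod.toCircle ((b * k : ℤ) : ZMod p) * ZMod.toCircle ((a * k : ℤ) : ZMod q) := by
  have hp : (p : ℂ) ≠ 0 := NeZero.ne _
  have hq : (q : ℂ) ≠ 0 := NeZero.ne _
  simp only [ZMod.toCircle_intCast, ← Complex.exp_add]
  congr 1
  push_cast
  have hab' : (p : ℂ) * a + q * b = 1 := by exact_mod_cast hab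
  field_simp
  linear_combination -k * hab'

lemma isUnit_intCast_of_bezout {p q : ℕ} {a b : ℤ} (hab : p * a + q * b = 1) :
    IsUnit (b : ZMod p) := by
  refine .of_mul_eq_one_right (q : ZMod p) ?_
  have := congrArg (Int.cast : ℤ → ZMod p) hab
  push_cast at this
  rwa [ZMod.natCast_self, zero_mul, zero_add] at this

section ChineseRemainder

variable {p q : ℕ} [NeZero p] [NeZero q]

def crtScaled (c : ZMod p) (d : ZMod q) (i : Fin (p * q)) : Fin p × Fin q :=
  (⟨(c * (i : ℕ)).val, ZMod.val_lt _⟩, ⟨(d * (i : ℕ)).val, ZMod.val_lt _⟩)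

@[simp]
lemma natCast_crtScaled_fst (c : ZMod p) (d : ZMod q) (i : Fin (p * q)) :
    (((crtScaled c d i).1 : ℕ) : ZMod p) = c * (i : ℕ) :=
  ZMod.natCast_zmod_val _

@[simp]
lemma natCast_crtScaled_snd (c : ZMod p) (d : ZMod q) (i : Fin (p * q)) :
    (((crtScaled c d i).2 : ℕ) : ZMod q) = d * (i : ℕ) :=
  ZMod.natCast_zmod_val _

lemma crtScaled_injective (hpq : p.Coprime q) {c : ZMod p} {d : ZMod q} (hc : IsUnit c)
    (hd : IsUnit d) : Function.Injective (crtScaled c d) := by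
  intro i j hij
  have hp : (i : ℕ) ≡ j [MOD p] := (ZMod.natCast_eq_natCast_iff _ _ _).mp <|
    hc.mul_left_cancel <| by simpa using congrArg (fun x => ((x.1 : ℕ) : ZMod p)) hij
  have hq : (i : ℕ) ≡ j [MOD q] := (ZMod.natCast_eq_natCast_iff _ _ _).mp <|
    hd.mul_left_cancel <| by simpa using congrArg (fun x => ((x.2 : ℕ) : ZMod q)) hij
  have hpq : (i : ℕ) ≡ j [MOD p * q] := (Nat.modEq_and_modEq_iff_modEq_mul hpq).mp ⟨hp, hq⟩
  exact Fin.ext <| by rwa [Nat.ModEq, Nat.mod_eq_of_lt i.isLt, Nat.mod_eq_of_lt j.isLt] at hpq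

noncomputable def crtPerm (hpq : p.Coprime q) {c : ZMod p} {d : ZMod q} (hc : IsUnit c)
    (hd : IsUnit d) : Equiv.Perm (Fin (p * q)) :=
  Equiv.ofBijective (finProdFinEquiv ∘ crtScaled c d) <| Finite.injective_iff_bijective.mp <|
    finProdFinEquiv.injective.comp (crtScaled_injective hpq hc hd)

@[simp]
lemma finProdFinEquiv_symm_crtPerm (hpq : p.Coprime q) {c : ZMod p} {d : ZMod q} (hc : IsUnit c)
    (hd : IsUnit d) (i : Fin (p * q)) :
    finProdFinEquiv.symm (crtPerm hpq hc hd i) = crtScaled c d i := by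
  simp [crtPerm]

end ChineseRemainder

theorem kron_Fourier_submatrix_crtPerm {p q : ℕ} [NeZero p] [NeZero q] (hpq : p.Coprime q)
    {a b : ℤ} (hab : p * a + q * b = 1) :
    (kron (Fourier p) (Fourier q)).submatrix (crtPerm hpq isUnit_one isUnit_one)
      (crtPerm hpq (isUnit_intCast_of_bezout hab)
        (isUnit_intCast_of_bezout (by linear_combination hab : q * b + p * a = 1))) =
      Fourier (p * q) := by
  ext i j
  simp only [submatrix_apply, kron, of_apply, finProdFinEquiv_symm_crtPerm,
    Fourier_apply_eq_toCircle, natCast_crtScaled_fst, natCast_crtScaled_snd]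
  have hnorm : ((1 / √p : ℝ) : ℂ) * ((1 / √q : ℝ) : ℂ) = ((1 / √(p * q : ℕ) : ℝ) : ℂ) := by
    rw [← Complex.ofReal_mul, Nat.cast_mul, Real.sqrt_mul (Nat.cast_nonneg _),
      one_div_mul_one_div]
  have hchar := toCircle_intCast_eq_mul_of_bezout hab ((i : ℕ) * (j : ℕ))
  push_cast at hchar
  rw [← hnorm, hchar]
  ring_nf

/-- for coprime `p, q` there are permutation matrices `P, Q` with
`P · (F_p ⊗ F_q) · Q = F_{pq}`. -/
theorem stmt5 (p q : ℕ) (hpq : Nat.Coprime p q) :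
    ∃ P Q : Matrix (Fin (p * q)) (Fin (p * q)) ℂ,
      IsPermMatrix P ∧ IsPermMatrix Q ∧
      P * kron (Fourier p) (Fourier q) * Q = Fourier (p * q) := by
  rcases Nat.eq_zero_or_pos (p * q) with h0 | hpos
  · exact exists_isPermMatrix_mul_mul_eq_of_submatrix_eq 1 1
      (Matrix.ext fun i => absurd i.2 (by omega))
  have : NeZero p := ⟨left_ne_zero_of_mul hpos.ne'⟩
  have : NeZero q := ⟨right_ne_zero_of_mul hpos.ne'⟩
  have hab : (p : ℤ) * p.gcdA q + q * p.gcdB q = 1 := by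
    rw [← Nat.gcd_eq_gcd_ab, hpq, Nat.cast_one]
  exact exists_isPermMatrix_mul_mul_eq_of_submatrix_eq _ _
    (kron_Fourier_submatrix_crtPerm hpq hab)
end

section
/- Let p, q be coprime, and choose integers a,b,c,d with a,c coprime to p, b,d coprime to q, satisfying acq ≡ 1 (mod p) and bdp ≡ 1 (mod q). Then for all ĩ, j̃ ∈ {0,...,pq-1}: ĩ·j̃ ≡ q·(aĩ mod p)(cj̃ mod p) + p·(bĩ mod q)(dj̃ mod q) (mod pq). -/
open Matrix

theorem Int.mul_modEq_mul_emod_mul_emod {m n u v : ℤ} (h : u * v * n ≡ 1 [ZMOD m]) (x y : ℤ) :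
    x * y ≡ n * (u * x % m) * (v * y % m) [ZMOD m] :=
  calc x * y = 1 * (x * y) := (one_mul _).symm
    _ ≡ u * v * n * (x * y) [ZMOD m] := h.symm.mul_right _
    _ = n * (u * x) * (v * y) := by ring
    _ ≡ n * (u * x % m) * (v * y % m) [ZMOD m] :=
      ((Int.mod_modEq _ _).symm.mul_left _).mul (Int.mod_modEq _ _).symm

theorem stmt6_general (p q a b c d : ℤ) (hpq : IsCoprime p q)
    (h1 : a * c * q ≡ 1 [ZMOD p]) (h2 : b * d * p ≡ 1 [ZMOD q])
    (i j : ℤ) :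
    i * j ≡ q * ((a * i) % p) * ((c * j) % p) + p * ((b * i) % q) * ((d * j) % q)
      [ZMOD (p * q)] := by
  refine (Int.modEq_and_modEq_iff_modEq_mul (Int.isCoprime_iff_gcd_eq_one.mp hpq)).mp ⟨?_, ?_⟩
  · exact (Int.mul_modEq_mul_emod_mul_emod h1 i j).trans
      (Int.add_modEq_left_iff.mpr (dvd_mul_of_dvd_left (dvd_mul_right p _) _)).symm
  · exact (Int.mul_modEq_mul_emod_mul_emod h2 i j).trans
      (Int.add_modEq_right_iff.mpr (dvd_mul_of_dvd_left (dvd_mul_right q _) _)).symm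

/-- the index congruence `ĩ·j̃ ≡ q(aĩ mod p)(cj̃ mod p) + p(bĩ mod q)(dj̃ mod q)
(mod pq)`. -/
theorem stmt6 (p q a b c d : ℤ) (hp : 0 < p) (hq : 0 < q) (hpq : IsCoprime p q)
    (hap : IsCoprime a p) (hcp : IsCoprime c p) (hbq : IsCoprime b q) (hdq : IsCoprime d q)
    (h1 : a * c * q ≡ 1 [ZMOD p]) (h2 : b * d * p ≡ 1 [ZMOD q])
    (i j : ℤ) (hi0 : 0 ≤ i) (hi : i < p * q) (hj0 : 0 ≤ j) (hj : j < p * q) :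
    i * j ≡ q * ((a * i) % p) * ((c * j) % p) + p * ((b * i) % q) * ((d * j) % q)
      [ZMOD (p * q)] :=
  stmt6_general p q a b c d hpq h1 h2 i j
end

section
/- Let F = F_{a^{k_s}} ⊗ ⋯ ⊗ F_{a^{k_1}} be a Kronecker product of Fourier matrices with a prime and k_s ≥ ⋯ ≥ k_1 ≥ 1. Then every row of F is a row of type (a,k) for some 0 ≤ k ≤ k_s, i.e. its entries are (1/√N) times the a^k-th roots of unity each occurring N/a^k times, where N = a^{k_1+⋯+k_s}. -/
open Matrix

/-!
Every row of `F_{n_1} ⊗ ⋯ ⊗ F_{n_s}`, multiplied by `√N`, is a character of the finite abelian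
group `ℤ/n_1 × ⋯ × ℤ/n_s` (row `i` of `F_n` is `j ↦ exp(2πi·ij/n)`, and Kronecker products of
rows are products of characters). The image of a character is a finite subgroup of `ℂˣ`, hence
the group of `d`-th roots of unity for `d` its order, and all fibres of a homomorphism have the
same size, so each `d`-th root of unity occurs `N / d` times. When every `n_i` is a power of the
prime `a`, all values are `a^K`-th roots of unity for `K = max k_i`, so `d ∣ a^K` is some `a^k`.
-/

open Finset

theorem Subgroup.eq_rootsOfUnity_card {R : Type*} [CommRing R] [IsDomain R] (H : Subgroup Rˣ)
    [Finite H] : H = rootsOfUnity (Nat.card H) R :=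
  Subgroup.eq_of_le_of_card_ge (fun x hx => (mem_rootsOfUnity _ _).2 <|
      congrArg Subtype.val (pow_card_eq_one' (x := (⟨x, hx⟩ : H))))
    (card_rootsOfUnity _ _)

theorem MonoidHom.card_fiber_eq_card_div {G M : Type*} [Group G] [Fintype G] [Monoid M]
    [DecidableEq M] (f : G →* M) {x : M} (hx : x ∈ Set.range f) :
    #{g | f g = x} = Fintype.card G / Nat.card (Set.range f) := by
  have hsum := card_eq_sum_card_image f univ
  rw [sum_congr rfl fun y hy => card_fiber_eq_of_mem_range f (by simpa using hy) hx,
    sum_const, smul_eq_mul, card_univ] at hsum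
  rw [Nat.card_eq_card_toFinset, Set.toFinset_range, hsum, Nat.mul_div_cancel_left]
  exact card_pos.2 (univ_nonempty.image f)

theorem Complex.mk0_exp_mem_rootsOfUnity {n : ℕ} (t : ℕ) (hn : n ≠ 0) :
    Units.mk0 (Complex.exp (2 * Real.pi * Complex.I * t / n)) (Complex.exp_ne_zero _) ∈
      rootsOfUnity n ℂ := by
  rw [_root_.mem_rootsOfUnity, Units.ext_iff, Units.val_pow_eq_pow_val, Units.val_mk0,
    ← Complex.exp_nat_mul, Units.val_one]
  rw [show (n : ℂ) * (2 * Real.pi * Complex.I * t / n) = t * (2 * Real.pi * Complex.I) by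
    field_simp]
  exact_mod_cast Complex.exp_nat_mul_two_pi_mul_I t

def IsCharacterRow (N M : ℕ) (v : Fin N → ℂ) : Prop :=
  ∃ (G : Type) (_ : CommGroup G) (e : Fin N ≃ G) (χ : G →* ℂˣ),
    χ.range ≤ rootsOfUnity M ℂ ∧ ∀ j, v j = ((1 / √N : ℝ) : ℂ) * χ (e j)

theorem IsCharacterRow.exists_rowVals {N M : ℕ} {v : Fin N → ℂ} (hv : IsCharacterRow N M v)
    (hN : N ≠ 0) : ∃ d, d ∣ M ∧ RowVals N d v := by
  classical
  obtain ⟨G, _, e, χ, hχM, hχv⟩ := hv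
  have : Fintype G := Fintype.ofEquiv _ e
  have hrange := χ.range.eq_rootsOfUnity_card
  refine ⟨Nat.card χ.range, ?_, fun t => ?_⟩
  · rcases eq_or_ne M 0 with rfl | hM
    · exact dvd_zero _
    · have : NeZero M := ⟨hM⟩
      exact Complex.card_rootsOfUnity M ▸ Subgroup.card_dvd_of_le hχM
  have hd : Nat.card χ.range ≠ 0 := Nat.card_pos.ne'
  have hc : ((1 / √N : ℝ) : ℂ) ≠ 0 := by simp [hN]
  set u := Units.mk0 _
    (Complex.exp_ne_zero (2 * Real.pi * Complex.I * (t : ℕ) / Nat.card χ.range))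
  have hu : u ∈ Set.range χ := by
    rw [← MonoidHom.coe_range, hrange]
    exact Complex.mk0_exp_mem_rootsOfUnity t hd
  calc _ = #{g | χ g = u} := card_equiv e fun j => by
          simp only [hχv, mul_right_inj' hc, Units.ext_iff, u, Units.val_mk0, mem_filter, mem_univ,
            true_and]
    _ = N / Nat.card χ.range := by
          rw [χ.card_fiber_eq_card_div hu, ← Fintype.card_congr e, Fintype.card_fin]; rfl

theorem ZMod.finEquiv_apply {n : ℕ} [NeZero n] (j : Fin n) :
    ZMod.finEquiv n j = ((j : ℕ) : ZMod n) := by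
  obtain ⟨k, rfl⟩ := Nat.exists_eq_succ_of_ne_zero (NeZero.ne n)
  exact (Fin.cast_val_eq_self j).symm

theorem isCharacterRow_fourier {n M : ℕ} (hnM : n ∣ M) (i : Fin n) :
    IsCharacterRow n M (Fourier n i) := by
  have : NeZero n := NeZero.of_pos i.pos
  refine ⟨Multiplicative (ZMod n), inferInstance,
    (ZMod.finEquiv n).toEquiv.trans Multiplicative.ofAdd,
    Circle.toUnits.comp (ZMod.toCircle.mulShift (i : ZMod n)).toMonoidHom, ?_, fun j => ?_⟩
  · rintro _ ⟨g, rfl⟩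
    obtain ⟨c, rfl⟩ := hnM
    have hg : g ^ n = 1 := by
      simpa only [Fintype.card_multiplicative, ZMod.card] using pow_card_eq_one (x := g)
    rw [_root_.mem_rootsOfUnity, ← map_pow, pow_mul, hg, one_pow, map_one]
  · simp only [Fourier, Matrix.of_apply, Equiv.trans_apply, RingEquiv.toEquiv_eq_coe,
      MonoidHom.comp_apply, AddChar.toMonoidHom_apply, toAdd_ofAdd, AddChar.mulShift_apply]
    rw [RingEquiv.coe_toEquiv, ZMod.finEquiv_apply, ← Nat.cast_mul, Circle.toUnits_apply,
      Units.val_mk0, ZMod.toCircle_natCast, Nat.cast_mul, mul_assoc (_ * Complex.I)]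

theorem IsCharacterRow.kronVec {m n M : ℕ} {v : Fin m → ℂ} {w : Fin n → ℂ}
    (hv : IsCharacterRow m M v) (hw : IsCharacterRow n M w) :
    IsCharacterRow (m * n) M (kronVec v w) := by
  obtain ⟨G, _, e, χ, hχM, hχv⟩ := hv
  obtain ⟨H, _, e', ψ, hψM, hψw⟩ := hw
  refine ⟨G × H, inferInstance, finProdFinEquiv.symm.trans (e.prodCongr e'), χ.coprod ψ,
    ?_, fun j => ?_⟩
  · rintro _ ⟨g, rfl⟩
    rw [_root_.mem_rootsOfUnity, MonoidHom.coprod_apply, mul_pow,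
      (mem_rootsOfUnity _ _).1 (hχM ⟨g.1, rfl⟩), (mem_rootsOfUnity _ _).1 (hψM ⟨g.2, rfl⟩),
      one_mul]
  · simp only [_root_.kronVec, hχv, hψw, Equiv.trans_apply, Equiv.prodCongr_apply,
      Prod.map, MonoidHom.coprod_apply, Units.val_mul]
    rw [Nat.cast_mul, Real.sqrt_mul (Nat.cast_nonneg m), ← one_div_mul_one_div,
      Complex.ofReal_mul]
    ring

theorem isCharacterRow_kronFourier {M : ℕ} :
    ∀ L : List ℕ, (∀ n ∈ L, n ∣ M) → ∀ i, IsCharacterRow L.prod M (kronFourier L i)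
  | [], _, i =>
    ⟨Unit, inferInstance, Equiv.ofUnique (Fin 1) Unit, 1, fun _ ⟨_, h⟩ => h ▸ one_mem _,
      fun j => by
        obtain rfl : i = j := Subsingleton.elim (α := Fin 1) i j
        simp [kronFourier]⟩
  | n :: L, hL, i => by
    rw [List.forall_mem_cons] at hL
    exact (isCharacterRow_fourier hL.1 _).kronVec (isCharacterRow_kronFourier L hL.2 _)

theorem stmt9_general (a : ℕ) (ha : a.Prime) (ks : List ℕ) (i : Fin ((ks.map (a ^ ·)).prod)) :
    ∃ k ≤ ks.foldr max 0,
      RowVals ((ks.map (a ^ ·)).prod) (a ^ k) (kronFourier (ks.map (a ^ ·)) i) := by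
  have hdvd : ∀ n ∈ ks.map (a ^ ·), n ∣ a ^ ks.foldr max 0 := by
    simp only [List.mem_map]
    rintro _ ⟨k, hk, rfl⟩
    exact pow_dvd_pow a (List.le_max_of_le' 0 hk le_rfl)
  obtain ⟨d, hd, hrow⟩ := (isCharacterRow_kronFourier _ hdvd i).exists_rowVals i.pos.ne'
  obtain ⟨k, hk, rfl⟩ := (Nat.dvd_prime_pow ha).1 hd
  exact ⟨k, hk, hrow⟩

/-- every row of a pure ordered FFKP `F_{a^{k_s}} ⊗ ⋯ ⊗ F_{a^{k_1}}`
is a row of type `(a,k)` for some `k ≤ k_s`. -/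
theorem stmt9 (a : ℕ) (ha : a.Prime) (ks : List ℕ) (hk : ∀ k ∈ ks, 1 ≤ k)
    (hsort : ks.Pairwise (· ≥ ·)) (i : Fin ((ks.map (a ^ ·)).prod)) :
    ∃ k ≤ ks.foldr max 0,
      RowVals ((ks.map (a ^ ·)).prod) (a ^ k) (kronFourier (ks.map (a ^ ·)) i) :=
  stmt9_general a ha ks i
end

section
/- For a prime a and a pure ordered FFKP F = F_{a^{k_s}} ⊗ ⋯ ⊗ F_{a^{k_1}} (k_s ≥ ⋯ ≥ k_1): the number of rows of type (a,1) in F equals a^s − 1, and the number of rows of type (a,0) (all-constant rows) equals 1. -/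
/-!
Row `i` of `F_{n₁} ⊗ ⋯ ⊗ F_{n_s}` is `N^{-1/2}` times a character of `∏ ZMod n_l`. Such a
character takes each value `exp (2πi t / m)`, `t < m`, exactly `N / m` times, where `m` is its
order, the lcm of the orders of the `i_l` in `ZMod n_l` (`rowOrder`); so the row has type `n`
exactly when `m = n`. If `d ∣ n_l` for all `l`, the rows with `m ∣ d` are those with `n_l / d ∣ i_l`
for all `l`, and there are `d ^ s` of them. For `a` prime, `m = a` means `m ∣ a` and `m ≠ 1`,
which leaves `a ^ s - 1` rows, and `m = 1` (the case `d = 1`) only the row `i = 0`.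
-/

open Matrix

open Finset

section Equidistributed

variable {α β γ : Type*} [Fintype α] [Fintype β] [Fintype γ] [DecidableEq β] [DecidableEq γ]

def Equidistributed (f : α → β) : Prop :=
  ∀ b, #{a | f a = b} = Fintype.card α / Fintype.card β

theorem card_eq_card_mul_of_card_fiber_eq {f : α → β} {k : ℕ} (h : ∀ b, #{a | f a = b} = k) :
    Fintype.card α = Fintype.card β * k := by
  rw [← card_univ, card_eq_sum_card_fiberwise (f := f) (t := univ) fun _ _ => mem_univ _]
  simp [h]

theorem Equidistributed.card_dvd {f : α → β} (hf : Equidistributed f) :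
    Fintype.card β ∣ Fintype.card α :=
  ⟨_, card_eq_card_mul_of_card_fiber_eq hf⟩

theorem equidistributed_of_card_fiber_eq {f : α → β}
    (h : ∀ b b', #{a | f a = b} = #{a | f a = b'}) : Equidistributed f := fun b => by
  have : Nonempty β := ⟨b⟩
  rw [card_eq_card_mul_of_card_fiber_eq fun b' => h b' b,
    Nat.mul_div_cancel_left _ Fintype.card_pos]

theorem Function.Bijective.equidistributed {f : α → β} (hf : f.Bijective) :
    Equidistributed f := by
  have hfiber : ∀ b, #{a | f a = b} = 1 := fun b => by
    obtain ⟨a, rfl⟩ := hf.2 b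
    exact card_eq_one.2 ⟨a, by ext; simp [hf.1.eq_iff]⟩
  exact equidistributed_of_card_fiber_eq fun b b' => by rw [hfiber, hfiber]

theorem AddMonoidHom.equidistributed_of_surjective {G H : Type*} [AddGroup G] [Fintype G]
    [AddMonoid H] [Fintype H] [DecidableEq H] (φ : G →+ H) (hφ : Function.Surjective φ) :
    Equidistributed φ :=
  equidistributed_of_card_fiber_eq fun b b' =>
    AddMonoidHom.card_fiber_eq_of_mem_range φ (hφ b) (hφ b')

theorem Equidistributed.comp {g : β → γ} {f : α → β} (hg : Equidistributed g)
    (hf : Equidistributed f) : Equidistributed (g ∘ f) := fun c => by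
  have hfiber : #{a | g (f a) = c} = ∑ b ∈ {b | g b = c}, #{a | f a = b} := by
    rw [card_eq_sum_card_fiberwise (f := f) (t := {b | g b = c}) fun a ha => by simpa using ha]
    refine sum_congr rfl fun b hb => ?_
    rw [filter_filter]
    refine congrArg card (filter_congr fun a _ => ?_)
    simp only [mem_filter, mem_univ, true_and] at hb
    exact ⟨And.right, fun hab => ⟨hab ▸ hb, hab⟩⟩
  obtain ⟨k, hk⟩ := hg.card_dvd
  obtain ⟨l, hl⟩ := hf.card_dvd
  have hγ : 0 < Fintype.card γ := Fintype.card_pos_iff.2 ⟨c⟩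
  simp only [Function.comp_apply, hfiber, hf _, sum_const, hg c, smul_eq_mul]
  rw [hl, hk]
  rcases Nat.eq_zero_or_pos k with rfl | hk0
  · simp
  · rw [Nat.mul_div_cancel_left _ hγ, Nat.mul_div_cancel_left _ (Nat.mul_pos hγ hk0), mul_assoc,
      Nat.mul_div_cancel_left _ hγ]

theorem Equidistributed.prodMap {α' β' : Type*} [Fintype α'] [Fintype β'] [DecidableEq β']
    {f : α → β} {g : α' → β'} (hf : Equidistributed f) (hg : Equidistributed g) :
    Equidistributed (Prod.map f g) := by
  rintro ⟨b, b'⟩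
  have hfiber : (univ.filter fun x : α × α' => Prod.map f g x = (b, b'))
      = ({a | f a = b} : Finset α) ×ˢ ({a' | g a' = b'} : Finset α') := by
    ext x; simp [Prod.ext_iff]
  rw [hfiber, card_product, hf, hg, Fintype.card_prod, Fintype.card_prod,
    Nat.div_mul_div_comm hf.card_dvd hg.card_dvd]

end Equidistributed

theorem bijective_natCast_fin (n : ℕ) [NeZero n] :
    Function.Bijective fun j : Fin n => ((j : ℕ) : ZMod n) := by
  refine (Fintype.bijective_iff_injective_and_card _).2 ⟨fun x y hxy => ?_, by simp⟩
  have := congrArg ZMod.val hxy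
  rwa [ZMod.val_cast_of_lt x.2, ZMod.val_cast_of_lt y.2, ← Fin.ext_iff] at this

theorem equidistributed_natCast_fin {n m : ℕ} [NeZero n] [NeZero m] (h : m ∣ n) :
    Equidistributed fun j : Fin n => ((j : ℕ) : ZMod m) := by
  simpa [Function.comp_def] using
    ((ZMod.castHom h (ZMod m)).toAddMonoidHom.equidistributed_of_surjective
      (ZMod.castHom_surjective h)).comp (bijective_natCast_fin n).equidistributed

instance instNeZeroLcm {m n : ℕ} [NeZero m] [NeZero n] : NeZero (Nat.lcm m n) :=
  ⟨Nat.lcm_ne_zero (NeZero.ne m) (NeZero.ne n)⟩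

instance instNeZeroAddOrderOf {n : ℕ} [NeZero n] (x : ZMod n) : NeZero (addOrderOf x) :=
  ⟨(addOrderOf_pos x).ne'⟩

theorem Nat.coprime_lcm_div_lcm_div {m n : ℕ} (hm : 0 < m) (hn : 0 < n) :
    Nat.Coprime (Nat.lcm m n / m) (Nat.lcm m n / n) := by
  have hleft : ∀ {m n : ℕ}, 0 < m → Nat.lcm m n / m = n / Nat.gcd m n := fun {m n} hm => by
    rw [Nat.lcm, Nat.mul_div_assoc _ (Nat.gcd_dvd_right m n), Nat.mul_div_cancel_left _ hm]
  rw [hleft hm, Nat.lcm_comm, hleft hn, Nat.gcd_comm n m]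
  exact (Nat.coprime_div_gcd_div_gcd (Nat.gcd_pos_of_pos_left n hm)).symm

namespace ZMod

theorem stdAddChar_natCast {N : ℕ} [NeZero N] (k : ℕ) :
    stdAddChar (k : ZMod N) = Complex.exp (2 * Real.pi * Complex.I * k / N) := by
  simpa using stdAddChar_coe (N := N) (k : ℤ)

noncomputable def scaleHom {d m : ℕ} (h : d ∣ m) : ZMod d →+ ZMod m :=
  ZMod.lift d ⟨zmultiplesHom (ZMod m) ((m / d : ℕ) : ZMod m), by
    simp [← Nat.cast_mul, Nat.mul_div_cancel' h]⟩

theorem scaleHom_intCast {d m : ℕ} (h : d ∣ m) (k : ℤ) :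
    scaleHom h k = k * ((m / d : ℕ) : ZMod m) := by
  simp [scaleHom, zsmul_eq_mul]

theorem stdAddChar_scaleHom {d m : ℕ} [NeZero d] [NeZero m] (h : d ∣ m) (x : ZMod d) :
    stdAddChar (scaleHom h x) = stdAddChar x := by
  obtain ⟨k, rfl⟩ := ZMod.intCast_surjective x
  rw [scaleHom_intCast, ← Int.cast_natCast, ← Int.cast_mul, stdAddChar_coe, stdAddChar_coe]
  have hdm : ((m / d : ℕ) : ℂ) * d = m := by exact_mod_cast Nat.div_mul_cancel h
  have hd : (d : ℂ) ≠ 0 := Nat.cast_ne_zero.2 (NeZero.ne d)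
  have hm : (m : ℂ) ≠ 0 := Nat.cast_ne_zero.2 (NeZero.ne m)
  congr 1
  field_simp
  simp only [Int.cast_mul, Int.cast_natCast]
  linear_combination (k : ℂ) * hdm

theorem scaleHom_coprod_scaleHom_surjective (m n : ℕ) [NeZero m] [NeZero n] :
    Function.Surjective
      ((scaleHom (Nat.dvd_lcm_left m n)).coprod (scaleHom (Nat.dvd_lcm_right m n))) := by
  obtain ⟨u, v, huv⟩ :=
    (Nat.coprime_lcm_div_lcm_div (NeZero.pos m) (NeZero.pos n)).isCoprime
  intro z
  obtain ⟨k, rfl⟩ := ZMod.intCast_surjective z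
  refine ⟨((k * u : ℤ), (k * v : ℤ)), ?_⟩
  have := congrArg (Int.cast : ℤ → ZMod (Nat.lcm m n)) huv
  simp only [Int.cast_add, Int.cast_mul, Int.cast_natCast, Int.cast_one] at this
  rw [AddMonoidHom.coprod_apply, scaleHom_intCast, scaleHom_intCast]
  simp only [Int.cast_mul]
  linear_combination (k : ZMod (Nat.lcm m n)) * this

end ZMod

def IsUniformRootRow {α : Type*} [Fintype α] (m : ℕ) [NeZero m] (c : ℂ) (v : α → ℂ) : Prop :=
  ∃ g : α → ZMod m, Equidistributed g ∧ ∀ j, v j = c * ZMod.stdAddChar (g j)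

theorem IsUniformRootRow.kronVec {n T m₁ m₂ : ℕ} [NeZero m₁] [NeZero m₂] {c₁ c₂ : ℂ}
    {v : Fin n → ℂ} {w : Fin T → ℂ} (hv : IsUniformRootRow m₁ c₁ v)
    (hw : IsUniformRootRow m₂ c₂ w) :
    IsUniformRootRow (Nat.lcm m₁ m₂) (c₁ * c₂) (kronVec v w) := by
  obtain ⟨g₁, hg₁, hv⟩ := hv
  obtain ⟨g₂, hg₂, hw⟩ := hw
  set φ := (ZMod.scaleHom (Nat.dvd_lcm_left m₁ m₂)).coprod
    (ZMod.scaleHom (Nat.dvd_lcm_right m₁ m₂))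
  refine ⟨φ ∘ Prod.map g₁ g₂ ∘ finProdFinEquiv.symm, ?_, fun j => ?_⟩
  · exact (φ.equidistributed_of_surjective (ZMod.scaleHom_coprod_scaleHom_surjective m₁ m₂)).comp
      ((hg₁.prodMap hg₂).comp finProdFinEquiv.symm.bijective.equidistributed)
  · simp only [_root_.kronVec, hv, hw, Function.comp_apply, Prod.map_fst, Prod.map_snd, φ,
      AddMonoidHom.coprod_apply, AddChar.map_add_eq_mul, ZMod.stdAddChar_scaleHom]
    ring

theorem isUniformRootRow_fourier {n : ℕ} [NeZero n] (i : Fin n) :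
    IsUniformRootRow (addOrderOf ((i : ℕ) : ZMod n)) ((1 / Real.sqrt n : ℝ) : ℂ) (Fourier n i) := by
  set m := addOrderOf ((i : ℕ) : ZMod n)
  set G := n.gcd i
  have hG : 0 < G := Nat.gcd_pos_of_pos_left _ (NeZero.pos n)
  have hm : m = n / G := ZMod.addOrderOf_coe _ (NeZero.ne n)
  have hmn : m ∣ n := hm ▸ Nat.div_dvd_of_dvd (Nat.gcd_dvd_left n i)
  set u := (i : ℕ) / G
  have hu : Nat.Coprime u m := hm ▸ (Nat.coprime_div_gcd_div_gcd hG).symm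
  -- `i / n = u / m` with `u` a unit mod `m`, so the phase `j ↦ u j` is equidistributed on `ZMod m`
  set φ : ZMod n →+ ZMod m :=
    (AddMonoidHom.mulLeft (u : ZMod m)).comp (ZMod.castHom hmn (ZMod m)).toAddMonoidHom
  have hφ : Function.Surjective φ :=
    (ZMod.unitOfCoprime u hu).mulLeft_bijective.2.comp (ZMod.castHom_surjective hmn)
  refine ⟨φ ∘ fun j : Fin n => ((j : ℕ) : ZMod n), ?_, fun j => ?_⟩
  · exact (φ.equidistributed_of_surjective hφ).comp (bijective_natCast_fin n).equidistributed
  have hval : φ ((j : ℕ) : ZMod n) = ((u * j : ℕ) : ZMod m) := by simp [φ]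
  rw [Function.comp_apply, hval, ZMod.stdAddChar_natCast]
  simp only [Fourier, Matrix.of_apply]
  congr 2
  have hnat : (i : ℕ) * m = u * n := by
    rw [hm, ← Nat.mul_div_assoc _ (Nat.gcd_dvd_left n i),
      Nat.div_mul_right_comm (Nat.gcd_dvd_right n i)]
  have hcast : ((i : ℕ) : ℂ) * m = u * n := by exact_mod_cast hnat
  have hn : (n : ℂ) ≠ 0 := Nat.cast_ne_zero.2 (NeZero.ne n)
  have hm0 : (m : ℂ) ≠ 0 := Nat.cast_ne_zero.2 (NeZero.ne m)
  rw [show addOrderOf ((i : ℕ) : ZMod n) = m from rfl]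
  field_simp
  push_cast
  linear_combination (j : ℂ) * hcast

noncomputable def rowOrder : (L : List ℕ) → Fin L.prod → ℕ
  | [], _ => 1
  | n :: t, i =>
    let x := (finProdFinEquiv (m := n) (n := t.prod)).symm i
    Nat.lcm (addOrderOf ((x.1 : ℕ) : ZMod n)) (rowOrder t x.2)

instance instNeZeroRowOrder : ∀ (L : List ℕ) (i : Fin L.prod), NeZero (rowOrder L i)
  | [], _ => ⟨one_ne_zero⟩
  | n :: t, i => by
    have : NeZero n := NeZero.of_pos ((finProdFinEquiv (m := n) (n := t.prod)).symm i).1.pos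
    have := instNeZeroRowOrder t ((finProdFinEquiv (m := n) (n := t.prod)).symm i).2
    exact instNeZeroLcm

theorem isUniformRootRow_kronFourier : ∀ (L : List ℕ) (i : Fin L.prod),
    IsUniformRootRow (rowOrder L i) ((1 / Real.sqrt L.prod : ℝ) : ℂ) (kronFourier L i)
  | [], i => by
    have : Subsingleton (ZMod (rowOrder [] i)) := inferInstanceAs (Subsingleton (ZMod 1))
    refine ⟨0, equidistributed_of_card_fiber_eq fun b b' => by rw [Subsingleton.elim b b'],
      fun j => ?_⟩
    obtain rfl : i = j := Subsingleton.elim (α := Fin 1) i j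
    simp [kronFourier]
  | n :: t, i => by
    set x := (finProdFinEquiv (m := n) (n := t.prod)).symm i
    have : NeZero n := NeZero.of_pos x.1.pos
    have hrow := (isUniformRootRow_fourier x.1).kronVec (isUniformRootRow_kronFourier t x.2)
    have hc : ((1 / Real.sqrt n : ℝ) : ℂ) * ((1 / Real.sqrt t.prod : ℝ) : ℂ)
        = ((1 / Real.sqrt (n :: t).prod : ℝ) : ℂ) := by
      rw [List.prod_cons, Nat.cast_mul, Real.sqrt_mul (Nat.cast_nonneg _)]
      push_cast
      ring
    rwa [hc] at hrow

theorem IsUniformRootRow.rowVals_iff {N m n : ℕ} [NeZero N] [NeZero m] {v : Fin N → ℂ}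
    (hv : IsUniformRootRow m ((1 / Real.sqrt N : ℝ) : ℂ) v) (hn : 0 < n) :
    RowVals N n v ↔ m = n := by
  classical
  unfold RowVals
  obtain ⟨g, hg, hv⟩ := hv
  set c : ℂ := ((1 / Real.sqrt N : ℝ) : ℂ)
  have hc : c ≠ 0 := by simp [c, NeZero.ne N]
  have hfiber : ∀ x : ZMod m, #{j | v j = c * ZMod.stdAddChar x} = N / m := fun x => by
    simp_rw [hv, mul_right_inj' hc, ZMod.injective_stdAddChar.eq_iff]
    simpa using hg x
  have hmN : m ∣ N := by simpa using hg.card_dvd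
  constructor
  · intro h
    have h0 : N / m = N / n := by
      have := h ⟨0, hn⟩
      simp only [Nat.cast_zero, mul_zero, zero_div, Complex.exp_zero] at this
      rwa [← hfiber 0, AddChar.map_zero_eq_one]
    -- `v` attains `c ζ` for a primitive `n`-th root of unity `ζ`, which is also an `m`-th root
    set t : Fin n := ⟨1 % n, Nat.mod_lt 1 hn⟩
    have hζ : IsPrimitiveRoot (Complex.exp (2 * Real.pi * Complex.I * (t : ℕ) / n)) n := by
      simpa [mul_div_assoc] using Complex.isPrimitiveRoot_exp_of_coprime (1 % n) n hn.ne'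
        (by rw [Nat.Coprime, ← Nat.gcd_rec]; exact Nat.gcd_one_right n)
    obtain ⟨j, hj⟩ : ∃ j, v j = c * Complex.exp (2 * Real.pi * Complex.I * (t : ℕ) / n) := by
      have hpos : 0 < N / m := Nat.div_pos (Nat.le_of_dvd (NeZero.pos N) hmN) (NeZero.pos m)
      obtain ⟨j, hj⟩ := card_pos.1 (h t ▸ h0 ▸ hpos)
      exact ⟨j, (mem_filter.1 hj).2⟩
    have hnm : n ∣ m := by
      refine hζ.dvd_of_pow_eq_one m ?_
      rw [mul_left_cancel₀ hc (hj.symm.trans (hv j)), ← AddChar.map_nsmul_eq_pow, nsmul_eq_mul,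
        ZMod.natCast_self, zero_mul, AddChar.map_zero_eq_one]
    calc m = N / (N / m) := (Nat.div_div_self hmN (NeZero.ne N)).symm
      _ = N / (N / n) := by rw [h0]
      _ = n := Nat.div_div_self (hnm.trans hmN) (NeZero.ne N)
  · rintro rfl t
    rw [← ZMod.stdAddChar_natCast]
    exact hfiber _

theorem countRows_kronFourier (L : List ℕ) {n : ℕ} (hn : 0 < n) :
    countRows L.prod n (kronFourier L) = #{i | rowOrder L i = n} := by
  classical
  refine congrArg card (filter_congr fun i _ => ?_)
  have : NeZero L.prod := NeZero.of_pos i.pos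
  exact (isUniformRootRow_kronFourier L i).rowVals_iff hn

theorem card_filter_addOrderOf_dvd {n d : ℕ} [NeZero n] (hd : d ∣ n) :
    #{i : Fin n | addOrderOf ((i : ℕ) : ZMod n) ∣ d} = d := by
  have hd0 : 0 < d := Nat.pos_of_dvd_of_pos hd (NeZero.pos n)
  have : NeZero (n / d) := ⟨(Nat.div_pos (Nat.le_of_dvd (NeZero.pos n) hd) hd0).ne'⟩
  have key : ∀ i : Fin n, addOrderOf ((i : ℕ) : ZMod n) ∣ d ↔ ((i : ℕ) : ZMod (n / d)) = 0 := by
    intro i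
    rw [addOrderOf_dvd_iff_nsmul_eq_zero, nsmul_eq_mul, ← Nat.cast_mul, ZMod.natCast_eq_zero_iff,
      ZMod.natCast_eq_zero_iff, Nat.div_dvd_iff_dvd_mul hd hd0]
  rw [filter_congr fun i _ => key i, equidistributed_natCast_fin (Nat.div_dvd_of_dvd hd) 0]
  simp [Nat.div_div_self hd (NeZero.ne n)]

theorem card_filter_rowOrder_dvd {d : ℕ} :
    ∀ L : List ℕ, (∀ n ∈ L, 0 < n ∧ d ∣ n) → #{i : Fin L.prod | rowOrder L i ∣ d} = d ^ L.length
  | [], _ => by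
    simp only [rowOrder, one_dvd, filter_true]
    exact card_fin 1
  | n :: t, hL => by
    have : NeZero n := ⟨(hL n List.mem_cons_self).1.ne'⟩
    calc #{i : Fin (n :: t).prod | rowOrder (n :: t) i ∣ d}
        = #(({x : Fin n | addOrderOf ((x : ℕ) : ZMod n) ∣ d} : Finset _) ×ˢ
            ({y : Fin t.prod | rowOrder t y ∣ d} : Finset _)) :=
          card_equiv (finProdFinEquiv (m := n) (n := t.prod)).symm fun i => by
            simp only [mem_filter, mem_univ, true_and, mem_product]
            exact Nat.lcm_dvd_iff
      _ = d ^ (n :: t).length := by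
        rw [card_product, card_filter_addOrderOf_dvd (hL n List.mem_cons_self).2,
          card_filter_rowOrder_dvd t fun k hk => hL k (List.mem_cons_of_mem n hk),
          List.length_cons, pow_succ']

theorem card_filter_rowOrder_eq_one {L : List ℕ} (hL : ∀ n ∈ L, 0 < n) :
    #{i : Fin L.prod | rowOrder L i = 1} = 1 := by
  simpa [Nat.dvd_one] using card_filter_rowOrder_dvd L fun n hn => ⟨hL n hn, one_dvd n⟩

theorem card_filter_rowOrder_eq_prime {L : List ℕ} {p : ℕ} (hp : p.Prime)
    (hL : ∀ n ∈ L, 0 < n ∧ p ∣ n) : #{i : Fin L.prod | rowOrder L i = p} = p ^ L.length - 1 := by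
  have hsplit : #{i : Fin L.prod | rowOrder L i ∣ p}
      = #{i : Fin L.prod | rowOrder L i = 1} + #{i : Fin L.prod | rowOrder L i = p} := by
    rw [← card_union_of_disjoint
      (disjoint_filter.2 fun _ _ h1 h2 => hp.one_lt.ne (h1.symm.trans h2)), ← filter_or]
    simp_rw [Nat.dvd_prime hp]
  rw [card_filter_rowOrder_dvd L hL, card_filter_rowOrder_eq_one fun n hn => (hL n hn).1] at hsplit
  omega

theorem stmt10_general (a : ℕ) (ha : a.Prime) (ks : List ℕ) (hk : ∀ k ∈ ks, 1 ≤ k) :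
    countRows ((ks.map (a ^ ·)).prod) (a ^ 1) (kronFourier (ks.map (a ^ ·)))
        = a ^ ks.length - 1 ∧
    countRows ((ks.map (a ^ ·)).prod) (a ^ 0) (kronFourier (ks.map (a ^ ·))) = 1 := by
  have hL : ∀ n ∈ ks.map (a ^ ·), 0 < n ∧ a ∣ n := by
    simp only [List.mem_map]
    rintro _ ⟨k, hk', rfl⟩
    exact ⟨pow_pos ha.pos k, dvd_pow_self a (Nat.one_le_iff_ne_zero.1 (hk k hk'))⟩
  rw [countRows_kronFourier _ (pow_pos ha.pos 1), countRows_kronFourier _ (pow_pos ha.pos 0),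
    pow_one, pow_zero, card_filter_rowOrder_eq_prime ha hL,
    card_filter_rowOrder_eq_one fun n hn => (hL n hn).1, List.length_map]
  exact ⟨rfl, rfl⟩

/-- a pure ordered FFKP with `s` factors has `a^s − 1` rows of type
`(a,1)` and exactly one row of type `(a,0)`. -/
theorem stmt10 (a : ℕ) (ha : a.Prime) (ks : List ℕ) (hk : ∀ k ∈ ks, 1 ≤ k)
    (hsort : ks.Pairwise (· ≥ ·)) :
    countRows ((ks.map (a ^ ·)).prod) (a ^ 1) (kronFourier (ks.map (a ^ ·)))
        = a ^ ks.length - 1 ∧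
    countRows ((ks.map (a ^ ·)).prod) (a ^ 0) (kronFourier (ks.map (a ^ ·))) = 1 :=
  stmt10_general a ha ks hk
end

section
/- Two pure ordered FFKPs F' = F_{a^{k_{s_1}}} ⊗ ⋯ ⊗ F_{a^{k_1}} and F'' = F_{a^{l_{s_2}}} ⊗ ⋯ ⊗ F_{a^{l_1}} (a prime, exponents nonincreasing) are permutation equivalent (F' = P_r F'' P_c for some permutation matrices) if and only if they are identical, i.e. s_1 = s_2 and k_j = l_j for all j. -/
/-!
Up to the common factor `1/√N`, row `i` of `F_{n₁} ⊗ ⋯ ⊗ F_{n_s}` is the character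
`j ↦ ∏ₜ ζ_{nₜ}^{iₜ jₜ}` of `⊕ₜ ℤ/nₜ`, so its `d`-th power is constant exactly when `nₜ ∣ iₜ d`
for every `t`. The number of rows with this property is unchanged by permuting rows and
columns, and equals `∏ₜ gcd(nₜ, d)`. For `nₜ = a^{kₜ}` and `d = a^m` this is
`a^{Σₜ min(kₜ, m)}`, so equivalent products have the same sums `Σₜ min(kₜ, m)` for all `m`.
The increments of these sums in `m` count the exponents larger than `m`, which determines the
multiset of exponents, and a nonincreasing list is determined by its multiset.
-/

open Matrix

open scoped Kronecker

section PowConstRows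

variable {R : Type*} {l m n o : Type*}

def IsPowConstRow [Monoid R] (M : Matrix m n R) (d : ℕ) (i : m) : Prop :=
  ∀ j j', M i j ^ d = M i j' ^ d

noncomputable def powConstRowCount [Monoid R] (M : Matrix m n R) (d : ℕ) : ℕ :=
  Nat.card {i // IsPowConstRow M d i}

theorem powConstRowCount_submatrix [Monoid R] (M : Matrix m n R) (d : ℕ)
    (e₁ : l ≃ m) (e₂ : o ≃ n) :
    powConstRowCount (M.submatrix e₁ e₂) d = powConstRowCount M d :=
  Nat.card_congr <| e₁.subtypeEquiv fun i => by
    simp only [IsPowConstRow, submatrix_apply, e₂.surjective.forall]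

theorem isPowConstRow_kronecker_iff [CommMonoidWithZero R] [IsCancelMulZero R]
    {A : Matrix m m R} {B : Matrix n n R} (hA : ∀ i j, A i j ≠ 0) (hB : ∀ i j, B i j ≠ 0)
    (d : ℕ) (i₁ : m) (i₂ : n) :
    IsPowConstRow (A ⊗ₖ B) d (i₁, i₂) ↔ IsPowConstRow A d i₁ ∧ IsPowConstRow B d i₂ := by
  simp only [IsPowConstRow, Prod.forall, kronecker_apply, mul_pow]
  refine ⟨fun h => ⟨fun j j' => ?_, fun j j' => ?_⟩, fun ⟨hA', hB'⟩ _ _ _ _ => by rw [hA', hB']⟩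
  · exact mul_right_cancel₀ (pow_ne_zero d (hB i₂ i₂)) (h j i₂ j' i₂)
  · exact mul_left_cancel₀ (pow_ne_zero d (hA i₁ i₁)) (h i₁ j i₁ j')

theorem powConstRowCount_kronecker [CommMonoidWithZero R] [IsCancelMulZero R]
    {A : Matrix m m R} {B : Matrix n n R} (hA : ∀ i j, A i j ≠ 0) (hB : ∀ i j, B i j ≠ 0)
    (d : ℕ) : powConstRowCount (A ⊗ₖ B) d = powConstRowCount A d * powConstRowCount B d := by
  rw [powConstRowCount, powConstRowCount, powConstRowCount, ← Nat.card_prod]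
  exact Nat.card_congr <|
    (Equiv.subtypeEquivRight fun i : m × n => isPowConstRow_kronecker_iff hA hB d i.1 i.2).trans
      Equiv.subtypeProdEquivProd

end PowConstRows

theorem IsPermMatrix.exists_eq_toMatrix {α : Type*} [DecidableEq α] {P : Matrix α α ℂ}
    (hP : IsPermMatrix P) : ∃ σ : Equiv.Perm α, P = σ.toPEquiv.toMatrix := by
  obtain ⟨σ, hσ⟩ := hP
  refine ⟨σ.symm, Matrix.ext fun i j => ?_⟩
  rw [hσ, PEquiv.toMatrix_apply]
  simp [Equiv.eq_symm_apply, eq_comm]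

theorem IsPermMatrix.exists_mul_mul_eq_submatrix {α : Type*} [Fintype α] [DecidableEq α]
    {P Q : Matrix α α ℂ} (hP : IsPermMatrix P) (hQ : IsPermMatrix Q) (M : Matrix α α ℂ) :
    ∃ σ τ : Equiv.Perm α, P * M * Q = M.submatrix σ τ := by
  obtain ⟨σ, rfl⟩ := hP.exists_eq_toMatrix
  obtain ⟨τ, rfl⟩ := hQ.exists_eq_toMatrix
  exact ⟨σ, τ.symm, by rw [PEquiv.toMatrix_toPEquiv_mul, PEquiv.mul_toMatrix_toPEquiv]; rfl⟩

theorem card_multiples_fin_mul {c : ℕ} (hc : 0 < c) (q : ℕ) :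
    Nat.card {i : Fin (c * q) // c ∣ i} = q := by
  refine (Nat.card_congr (Equiv.ofBijective
    (fun j : Fin q => ⟨⟨c * j, Nat.mul_lt_mul_of_pos_left j.isLt hc⟩, dvd_mul_right c j⟩)
    ⟨fun j j' h => ?_, fun ⟨i, hi⟩ => ?_⟩)).symm.trans (Nat.card_fin q)
  · exact Fin.ext (Nat.eq_of_mul_eq_mul_left hc (congrArg (fun i => (i.1 : ℕ)) h))
  · obtain ⟨j, hj⟩ := hi
    exact ⟨⟨j, Nat.lt_of_mul_lt_mul_left (hj ▸ i.isLt)⟩, Subtype.ext (Fin.ext hj.symm)⟩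

theorem card_fin_dvd_mul_eq_gcd {n : ℕ} (hn : 0 < n) (d : ℕ) :
    Nat.card {i : Fin n // n ∣ i * d} = n.gcd d := by
  obtain ⟨n', d', hcop, hn', hd'⟩ := Nat.exists_coprime n d
  have hg : 0 < n.gcd d := Nat.gcd_pos_of_pos_left d hn
  generalize n.gcd d = g at hg hn' hd' ⊢
  subst hn' hd'
  simp_rw [← mul_assoc, Nat.mul_dvd_mul_iff_right hg, hcop.dvd_mul_right]
  exact card_multiples_fin_mul (Nat.pos_of_mul_pos_right hn) g

theorem Nat.gcd_pow_pow_eq_pow_min (a k m : ℕ) : (a ^ k).gcd (a ^ m) = a ^ min k m := by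
  rcases le_total k m with h | h
  · rw [min_eq_left h, Nat.gcd_eq_left (pow_dvd_pow a h)]
  · rw [min_eq_right h, Nat.gcd_eq_right (pow_dvd_pow a h)]

theorem fourier_apply_eq_pow {n : ℕ} (i j : Fin n) :
    Fourier n i j = ((1 / Real.sqrt n : ℝ) : ℂ) *
      Complex.exp (2 * Real.pi * Complex.I / n) ^ ((i : ℕ) * j) := by
  rw [Fourier, of_apply, ← Complex.exp_nat_mul]
  congr 2
  push_cast
  ring

theorem fourier_apply_ne_zero {n : ℕ} (i j : Fin n) : Fourier n i j ≠ 0 := by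
  rw [fourier_apply_eq_pow]
  exact mul_ne_zero (by simp [i.pos.ne']) (pow_ne_zero _ (Complex.exp_ne_zero _))

theorem isPowConstRow_fourier_iff {n : ℕ} (d : ℕ) (i : Fin n) :
    IsPowConstRow (Fourier n) d i ↔ n ∣ i * d := by
  have hn : 0 < n := i.pos
  have hζ := Complex.isPrimitiveRoot_exp n hn.ne'
  have hc : ((1 / Real.sqrt n : ℝ) : ℂ) ^ d ≠ 0 := pow_ne_zero d (by simp [hn.ne'])
  simp only [IsPowConstRow, fourier_apply_eq_pow, mul_pow, ← pow_mul, mul_right_inj' hc]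
  constructor
  · intro h
    rcases Nat.lt_or_ge 1 n with h1 | h1
    · have := h ⟨1, h1⟩ ⟨0, hn⟩
      rwa [mul_zero, zero_mul, pow_zero, hζ.pow_eq_one_iff_dvd, mul_one] at this
    · simp [Nat.le_antisymm h1 hn]
  · intro h j j'
    have hpow (j : Fin n) :
        Complex.exp (2 * Real.pi * Complex.I / n) ^ ((i : ℕ) * j * d) = 1 := by
      rw [hζ.pow_eq_one_iff_dvd, mul_right_comm]
      exact h.mul_right j
    rw [hpow, hpow]

theorem powConstRowCount_fourier {n : ℕ} (hn : 0 < n) (d : ℕ) :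
    powConstRowCount (Fourier n) d = n.gcd d := by
  rw [powConstRowCount, ← card_fin_dvd_mul_eq_gcd hn d]
  exact Nat.card_congr (Equiv.subtypeEquivRight (isPowConstRow_fourier_iff d))

-- `kron A B` is `A ⊗ₖ B` reindexed along `finProdFinEquiv`, definitionally.
theorem powConstRowCount_kron {m n : ℕ} {A : Matrix (Fin m) (Fin m) ℂ}
    {B : Matrix (Fin n) (Fin n) ℂ} (hA : ∀ i j, A i j ≠ 0) (hB : ∀ i j, B i j ≠ 0) (d : ℕ) :
    powConstRowCount (kron A B) d = powConstRowCount A d * powConstRowCount B d :=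
  (powConstRowCount_submatrix (A ⊗ₖ B) d _ _).trans (powConstRowCount_kronecker hA hB d)

theorem kronFourier_apply_ne_zero (L : List ℕ) (i j : Fin L.prod) : kronFourier L i j ≠ 0 := by
  induction L with
  | nil =>
    obtain rfl : i = j := Subsingleton.elim (α := Fin 1) i j
    exact (one_apply_eq (α := ℂ) i).trans_ne one_ne_zero
  | cons n L ih => exact mul_ne_zero (fourier_apply_ne_zero _ _) (ih _ _)

theorem powConstRowCount_kronFourier (d : ℕ) {L : List ℕ} (hL : ∀ n ∈ L, 0 < n) :
    powConstRowCount (kronFourier L) d = (L.map (·.gcd d)).prod := by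
  induction L with
  | nil =>
    show Nat.card {i : Fin 1 // IsPowConstRow (1 : Matrix (Fin 1) (Fin 1) ℂ) d i} = 1
    rw [Nat.card_eq_one_iff_unique]
    exact ⟨inferInstance, ⟨⟨0, fun j j' => by rw [Subsingleton.elim j j']⟩⟩⟩
  | cons n L ih =>
    show powConstRowCount (kron (Fourier n) (kronFourier L)) d = _
    rw [powConstRowCount_kron fourier_apply_ne_zero (kronFourier_apply_ne_zero L),
      powConstRowCount_fourier (hL n List.mem_cons_self),
      ih fun k hk => hL k (List.mem_cons_of_mem _ hk), List.map_cons, List.prod_cons]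

namespace List

theorem prod_map_pow_eq_pow_sum {M : Type*} [Monoid M] (a : M) (L : List ℕ) :
    (L.map (a ^ ·)).prod = a ^ L.sum := by
  induction L <;> simp [pow_add, *]

theorem sum_map_min_succ (L : List ℕ) (m : ℕ) :
    (L.map (min · (m + 1))).sum = (L.map (min · m)).sum + L.countP (m < ·) := by
  induction L with
  | nil => simp
  | cons x L ih =>
    simp only [map_cons, sum_cons, countP_cons, ih]
    split_ifs with hx <;> simp at hx <;> omega

theorem countP_lt_eq_count_add (L : List ℕ) (m : ℕ) :
    L.countP (m < ·) = L.count (m + 1) + L.countP (m + 1 < ·) := by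
  induction L with
  | nil => simp
  | cons x L ih => simp only [countP_cons, count_cons, ih]; split_ifs <;> simp_all <;> omega

theorem eq_of_sum_map_min_eq {ks ls : List ℕ} (hk : ∀ k ∈ ks, 1 ≤ k) (hl : ∀ l ∈ ls, 1 ≤ l)
    (hks : ks.Pairwise (· ≥ ·)) (hls : ls.Pairwise (· ≥ ·))
    (h : ∀ m, (ks.map (min · m)).sum = (ls.map (min · m)).sum) : ks = ls := by
  have hcountP (m : ℕ) : ks.countP (m < ·) = ls.countP (m < ·) := by
    have := h (m + 1)
    rw [sum_map_min_succ, sum_map_min_succ, h m] at this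
    omega
  have hcount : ∀ v, ks.count v = ls.count v := by
    rintro (_ | v)
    · rw [count_eq_zero.2 fun h0 => by simpa using hk 0 h0,
        count_eq_zero.2 fun h0 => by simpa using hl 0 h0]
    · have := countP_lt_eq_count_add ks v
      have := countP_lt_eq_count_add ls v
      have := hcountP v
      have := hcountP (v + 1)
      omega
  exact Perm.eq_of_pairwise' hks hls (perm_iff_count.2 hcount)

end List

/-- two pure ordered FFKPs are permutation equivalent iff they are
identical. -/
theorem stmt14 (a : ℕ) (ha : a.Prime) (ks ls : List ℕ)
    (hk : ∀ k ∈ ks, 1 ≤ k) (hl : ∀ k ∈ ls, 1 ≤ k)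
    (hks : ks.Pairwise (· ≥ ·)) (hls : ls.Pairwise (· ≥ ·))
    (hsize : (ks.map (a ^ ·)).prod = (ls.map (a ^ ·)).prod) :
    (∃ P Q : Matrix (Fin ((ks.map (a ^ ·)).prod)) (Fin ((ks.map (a ^ ·)).prod)) ℂ,
      IsPermMatrix P ∧ IsPermMatrix Q ∧
      Matrix.reindex (finCongr hsize.symm) (finCongr hsize.symm)
          (kronFourier (ls.map (a ^ ·)))
        = P * kronFourier (ks.map (a ^ ·)) * Q) ↔ ks = ls := by
  constructor
  · rintro ⟨P, Q, hP, hQ, heq⟩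
    obtain ⟨σ, τ, hPQ⟩ := hP.exists_mul_mul_eq_submatrix hQ (kronFourier (ks.map (a ^ ·)))
    have hpos (L : List ℕ) : ∀ n ∈ L.map (a ^ ·), 0 < n := by simp [ha.pos]
    refine List.eq_of_sum_map_min_eq hk hl hks hls fun m => Nat.pow_right_injective ha.two_le ?_
    have hcount := congrArg (powConstRowCount · (a ^ m)) heq
    simp only [reindex_apply, hPQ, powConstRowCount_submatrix,
      powConstRowCount_kronFourier _ (hpos _)] at hcount
    simpa [List.map_map, Function.comp_def, Nat.gcd_pow_pow_eq_pow_min,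
      ← List.prod_map_pow_eq_pow_sum] using hcount.symm
  · rintro rfl
    refine ⟨1, 1, ⟨1, fun i j => ?_⟩, ⟨1, fun i j => ?_⟩, by simp⟩ <;> simp [one_apply, eq_comm]
end

section
/- Two Kronecker products of Fourier matrices of prime-power sizes (FFKPs) of the same size N are permutation equivalent if and only if they have identical factor multisets, i.e. the factors of one are a permutation of the factors of the other. -/
open Matrix

/-!
Permuting rows and columns does not change how many rows of `√N • A` consist of `m`-th roots of
unity. For `F_{n₁} ⊗ ⋯ ⊗ F_{n_r}` the scaled entry at `((i₁, …, i_r), (j₁, …, j_r))` is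
`∏ₖ exp (2πi iₖ jₖ / nₖ)`, so this number is `∏ₖ gcd nₖ m`. Comparing `m = p ^ a` with
`m = p ^ (a + 1)` gives the number of factors divisible by `p ^ (a + 1)`, and hence the
multiplicity of every prime power among the factors. Conversely, reordering the factors of a
Kronecker product permutes its rows and columns simultaneously.
-/

open scoped Real
open Finset

lemma gcd_prime_pow_succ {p : ℕ} (hp : p.Prime) (x a : ℕ) :
    x.gcd (p ^ (a + 1)) = x.gcd (p ^ a) * if p ^ (a + 1) ∣ x then p else 1 := by
  by_cases h : p ^ (a + 1) ∣ x
  · rw [if_pos h, Nat.gcd_eq_right h, Nat.gcd_eq_right ((pow_dvd_pow p a.le_succ).trans h),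
      pow_succ]
  · rw [if_neg h, mul_one]
    refine Nat.dvd_antisymm ?_ (Nat.gcd_dvd_gcd_of_dvd_right _ (pow_dvd_pow p a.le_succ))
    obtain ⟨k, hk, hgk⟩ := (Nat.dvd_prime_pow hp).1 (Nat.gcd_dvd_right x (p ^ (a + 1)))
    have hkx : p ^ k ∣ x := hgk ▸ Nat.gcd_dvd_left _ _
    have hka : k ≤ a := by
      by_contra! hka
      exact h (by rwa [show k = a + 1 by omega] at hkx)
    rw [hgk]
    exact Nat.dvd_gcd hkx (pow_dvd_pow p hka)

lemma prod_map_gcd_prime_pow_succ {p : ℕ} (hp : p.Prime) (a : ℕ) (L : List ℕ) :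
    (L.map (·.gcd (p ^ (a + 1)))).prod
      = (L.map (·.gcd (p ^ a))).prod * p ^ L.countP (p ^ (a + 1) ∣ ·) := by
  induction L with
  | nil => simp
  | cons x L ih =>
    simp only [List.map_cons, List.prod_cons, List.countP_cons, ih, gcd_prime_pow_succ hp x a,
      decide_eq_true_eq]
    split_ifs <;> ring

lemma countP_pow_dvd_eq {p : ℕ} (hp : p.Prime) {L M : List ℕ}
    (h : ∀ m, (L.map (·.gcd m)).prod = (M.map (·.gcd m)).prod) (a : ℕ) :
    L.countP (p ^ (a + 1) ∣ ·) = M.countP (p ^ (a + 1) ∣ ·) := by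
  have hsucc := h (p ^ (a + 1))
  rw [prod_map_gcd_prime_pow_succ hp, prod_map_gcd_prime_pow_succ hp, h (p ^ a)] at hsucc
  have hne : (M.map (·.gcd (p ^ a))).prod ≠ 0 := by
    simp [List.prod_eq_zero_iff, Nat.gcd_eq_zero_iff, hp.ne_zero]
  exact Nat.pow_right_injective hp.two_le (mul_left_cancel₀ hne hsucc)

lemma IsPrimePow.eq_pow_of_pow_dvd_of_not_pow_succ_dvd {y p e : ℕ} (hy : IsPrimePow y)
    (hp : p.Prime) (he : 0 < e) (hdvd : p ^ e ∣ y) (hndvd : ¬p ^ (e + 1) ∣ y) : y = p ^ e := by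
  obtain ⟨q, f, hq, -, rfl⟩ := hy
  have hpq : p = q := (Nat.prime_dvd_prime_iff_eq hp hq.nat_prime).1
    (hp.dvd_of_dvd_pow ((dvd_pow_self p he.ne').trans hdvd))
  subst hpq
  rw [Nat.pow_dvd_pow_iff_le_right hp.one_lt] at hdvd hndvd
  rw [show f = e by omega]

lemma count_add_countP_pow_succ_dvd {p e : ℕ} (hp : p.Prime) (he : 0 < e) {L : List ℕ}
    (hL : ∀ y ∈ L, IsPrimePow y) :
    L.count (p ^ e) + L.countP (p ^ (e + 1) ∣ ·) = L.countP (p ^ e ∣ ·) := by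
  induction L with
  | nil => simp
  | cons y L ih =>
    rw [List.count_cons, List.countP_cons, List.countP_cons,
      ← ih fun z hz => hL z (List.mem_cons_of_mem y hz)]
    have hy := hL y List.mem_cons_self
    by_cases h1 : p ^ (e + 1) ∣ y
    · have hne : y ≠ p ^ e := by
        rintro rfl
        rw [Nat.pow_dvd_pow_iff_le_right hp.one_lt] at h1
        omega
      simp only [beq_iff_eq, hne, ↓reduceIte, add_zero, h1, decide_true,
        (pow_dvd_pow p e.le_succ).trans h1]
      omega
    · by_cases h2 : p ^ e ∣ y
      · obtain rfl := hy.eq_pow_of_pow_dvd_of_not_pow_succ_dvd hp he h2 h1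
        simp only [BEq.rfl, ↓reduceIte, h1, decide_false, Bool.false_eq_true, add_zero, dvd_refl,
          decide_true]
        omega
      · have hne : y ≠ p ^ e := by rintro rfl; exact h2 dvd_rfl
        simp [h1, h2, hne]

theorem perm_of_prod_map_gcd_eq {L M : List ℕ} (hL : ∀ y ∈ L, IsPrimePow y)
    (hM : ∀ y ∈ M, IsPrimePow y) (h : ∀ m, (L.map (·.gcd m)).prod = (M.map (·.gcd m)).prod) :
    L.Perm M := by
  rw [List.perm_iff_count]
  intro y
  by_cases hy : IsPrimePow y
  · obtain ⟨p, e, hp, he, rfl⟩ := hy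
    obtain ⟨a, rfl⟩ := Nat.exists_eq_add_one_of_ne_zero he.ne'
    have := count_add_countP_pow_succ_dvd hp.nat_prime he hL
    have := count_add_countP_pow_succ_dvd hp.nat_prime he hM
    have := countP_pow_dvd_eq hp.nat_prime h a
    have := countP_pow_dvd_eq hp.nat_prime h (a + 1)
    omega
  · rw [List.count_eq_zero.2 fun hy' => hy (hL y hy'),
      List.count_eq_zero.2 fun hy' => hy (hM y hy')]

lemma card_filter_dvd_mul (n m : ℕ) [NeZero n] : #{i : Fin n | n ∣ i * m} = n.gcd m := by
  obtain ⟨k, rfl⟩ := Nat.exists_eq_add_one_of_ne_zero (NeZero.ne n)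
  rw [← Nat.card_zmod (k + 1), ← IsAddCyclic.card_nsmulAddMonoidHom_ker, ← Fintype.card_subtype,
    ← Nat.card_eq_fintype_card, Nat.card_zmod]
  refine Nat.card_congr (Equiv.subtypeEquivRight fun (i : ZMod (k + 1)) => ?_)
  rw [AddMonoidHom.mem_ker, nsmulAddMonoidHom_apply, nsmul_eq_mul]
  conv_rhs => rw [← ZMod.natCast_zmod_val i, ← Nat.cast_mul, ZMod.natCast_eq_zero_iff, mul_comm]
  rfl

lemma forall_mul_pow_eq_one_iff {M α β : Type*} [CommMonoid M] {f : α → M} {g : β → M}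
    (hf : ∃ a, f a = 1) (hg : ∃ b, g b = 1) (m : ℕ) :
    (∀ a b, (f a * g b) ^ m = 1) ↔ (∀ a, f a ^ m = 1) ∧ ∀ b, g b ^ m = 1 := by
  obtain ⟨a₀, ha₀⟩ := hf
  obtain ⟨b₀, hb₀⟩ := hg
  refine ⟨fun h => ⟨fun a => ?_, fun b => ?_⟩, fun h a b => by rw [mul_pow, h.1, h.2, one_mul]⟩
  · simpa [hb₀] using h a b₀
  · simpa [ha₀] using h a₀ b

open Classical in
noncomputable def rowsPowEqOne {ι κ : Type*} [Fintype ι] (c : ℂ) (m : ℕ) (A : Matrix ι κ ℂ) :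
    Finset ι :=
  {i | ∀ j, (c * A i j) ^ m = 1}

section rowsPowEqOne

variable {ι κ ι' κ' : Type*} [Fintype ι] [Fintype ι'] {c : ℂ} {m : ℕ}

lemma mem_rowsPowEqOne {A : Matrix ι κ ℂ} {i : ι} :
    i ∈ rowsPowEqOne c m A ↔ ∀ j, (c * A i j) ^ m = 1 := by
  simp [rowsPowEqOne]

lemma card_rowsPowEqOne_submatrix (A : Matrix ι' κ' ℂ) (e : ι ≃ ι') (f : κ ≃ κ') :
    #(rowsPowEqOne c m (A.submatrix e f)) = #(rowsPowEqOne c m A) :=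
  card_equiv e fun i => by
    simp only [mem_rowsPowEqOne, submatrix_apply]
    exact f.forall_congr_right (q := fun j => (c * A (e i) j) ^ m = 1)

end rowsPowEqOne

section kron

variable {a b : ℕ} {A : Matrix (Fin a) (Fin a) ℂ} {B : Matrix (Fin b) (Fin b) ℂ} {c d : ℂ}

lemma kron_finProdFinEquiv (i j : Fin a × Fin b) :
    kron A B (finProdFinEquiv i) (finProdFinEquiv j) = A i.1 j.1 * B i.2 j.2 := by
  simp only [kron, of_apply, Equiv.symm_apply_apply]

lemma exists_mul_kron_eq_one (hA : ∀ i, ∃ j, c * A i j = 1) (hB : ∀ i, ∃ j, d * B i j = 1)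
    (i : Fin (a * b)) : ∃ j, c * d * kron A B i j = 1 := by
  obtain ⟨i, rfl⟩ := finProdFinEquiv.surjective i
  obtain ⟨j₁, hj₁⟩ := hA i.1
  obtain ⟨j₂, hj₂⟩ := hB i.2
  refine ⟨finProdFinEquiv (j₁, j₂), ?_⟩
  rw [kron_finProdFinEquiv, mul_mul_mul_comm, hj₁, hj₂, one_mul]

lemma card_rowsPowEqOne_kron (hA : ∀ i, ∃ j, c * A i j = 1) (hB : ∀ i, ∃ j, d * B i j = 1)
    (m : ℕ) :
    #(rowsPowEqOne (c * d) m (kron A B)) = #(rowsPowEqOne c m A) * #(rowsPowEqOne d m B) := by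
  rw [← card_product]
  refine card_equiv finProdFinEquiv.symm fun i => ?_
  obtain ⟨i, rfl⟩ := finProdFinEquiv.surjective i
  rw [Equiv.symm_apply_apply, mem_product, mem_rowsPowEqOne, mem_rowsPowEqOne, mem_rowsPowEqOne,
    ← forall_mul_pow_eq_one_iff (hA i.1) (hB i.2), ← finProdFinEquiv.forall_congr_right]
  simp only [kron_finProdFinEquiv, Prod.forall, mul_mul_mul_comm]

end kron

lemma sqrt_mul_fourier_apply {n : ℕ} (i j : Fin n) :
    (√(n : ℝ) : ℂ) * Fourier n i j = Complex.exp (2 * π * Complex.I / n) ^ ((i : ℕ) * j) := by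
  have hn : (n : ℝ) ≠ 0 := Nat.cast_ne_zero.2 (Fin.pos i).ne'
  rw [Fourier, of_apply, ← mul_assoc, ← Complex.ofReal_mul, mul_one_div_cancel
    (Real.sqrt_ne_zero'.2 (by positivity)), Complex.ofReal_one, one_mul, ← Complex.exp_nat_mul]
  congr 1
  push_cast
  ring

lemma mem_rowsPowEqOne_fourier {n : ℕ} (m : ℕ) (i : Fin n) :
    i ∈ rowsPowEqOne (√(n : ℝ) : ℂ) m (Fourier n) ↔ n ∣ i * m := by
  have hζ := Complex.isPrimitiveRoot_exp n (Fin.pos i).ne'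
  simp only [mem_rowsPowEqOne, sqrt_mul_fourier_apply, ← pow_mul, hζ.pow_eq_one_iff_dvd]
  refine ⟨fun h => ?_, fun h j => ?_⟩
  · rcases Nat.lt_or_ge n 2 with hn | hn
    · exact (Nat.dvd_one.2 (by have := Fin.pos i; omega)).trans (one_dvd _)
    · simpa using h ⟨1, hn⟩
  · rw [mul_right_comm]
    exact h.mul_right _

lemma exists_sqrt_mul_fourier_eq_one {n : ℕ} (i : Fin n) :
    ∃ j, (√(n : ℝ) : ℂ) * Fourier n i j = 1 :=
  ⟨⟨0, Fin.pos i⟩, by simp [sqrt_mul_fourier_apply]⟩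

lemma card_rowsPowEqOne_fourier (n m : ℕ) [NeZero n] :
    #(rowsPowEqOne (√(n : ℝ) : ℂ) m (Fourier n)) = n.gcd m := by
  rw [← card_filter_dvd_mul]
  congr 1
  ext i
  simp [mem_rowsPowEqOne_fourier]

lemma sqrt_prod_cons (n : ℕ) (L : List ℕ) :
    (√((n :: L).prod : ℝ) : ℂ) = (√(n : ℝ) : ℂ) * (√(L.prod : ℝ) : ℂ) := by
  rw [List.prod_cons, Nat.cast_mul, Real.sqrt_mul (Nat.cast_nonneg n), Complex.ofReal_mul]

lemma exists_sqrt_mul_kronFourier_eq_one (L : List ℕ) (i : Fin L.prod) :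
    ∃ j, (√(L.prod : ℝ) : ℂ) * kronFourier L i j = 1 := by
  induction L with
  | nil => exact ⟨i, by simp [kronFourier]⟩
  | cons n L ih =>
    rw [sqrt_prod_cons]
    exact exists_mul_kron_eq_one exists_sqrt_mul_fourier_eq_one ih i

lemma card_rowsPowEqOne_kronFourier {L : List ℕ} (hL : ∀ n ∈ L, 0 < n) (m : ℕ) :
    #(rowsPowEqOne (√(L.prod : ℝ) : ℂ) m (kronFourier L)) = (L.map (·.gcd m)).prod := by
  induction L with
  | nil =>
    show #(rowsPowEqOne (√((1 : ℕ) : ℝ) : ℂ) m (1 : Matrix (Fin 1) (Fin 1) ℂ)) = 1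
    simp [rowsPowEqOne, Matrix.one_apply, Fin.fin_one_eq_zero]
  | cons n L ih =>
    have : NeZero n := ⟨(hL n List.mem_cons_self).ne'⟩
    rw [sqrt_prod_cons]
    refine (card_rowsPowEqOne_kron exists_sqrt_mul_fourier_eq_one
      (exists_sqrt_mul_kronFourier_eq_one L) m).trans ?_
    rw [card_rowsPowEqOne_fourier, ih fun x hx => hL x (List.mem_cons_of_mem n hx), List.map_cons,
      List.prod_cons]

lemma isPermMatrix_iff {α : Type*} [DecidableEq α] (P : Matrix α α ℂ) :
    IsPermMatrix P ↔ ∃ σ : Equiv.Perm α, P = σ.toPEquiv.toMatrix := by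
  refine ⟨fun ⟨σ, hσ⟩ => ⟨σ.symm, ?_⟩, fun ⟨σ, hσ⟩ => ⟨σ.symm, ?_⟩⟩
  · ext i j
    simp [hσ, Equiv.symm_apply_eq, eq_comm (a := i)]
  · intro i j
    simp [hσ, Equiv.eq_symm_apply, eq_comm]

lemma exists_isPermMatrix_mul_mul_iff {α : Type*} [Fintype α] [DecidableEq α]
    (A B : Matrix α α ℂ) :
    (∃ P Q : Matrix α α ℂ, IsPermMatrix P ∧ IsPermMatrix Q ∧ B = P * A * Q)
      ↔ ∃ σ τ : Equiv.Perm α, B = A.submatrix σ τ := by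
  simp only [isPermMatrix_iff]
  constructor
  · rintro ⟨_, _, ⟨σ, rfl⟩, ⟨τ, rfl⟩, rfl⟩
    exact ⟨σ, τ.symm, by rw [PEquiv.toMatrix_toPEquiv_mul, PEquiv.mul_toMatrix_toPEquiv,
      submatrix_submatrix]; rfl⟩
  · rintro ⟨σ, τ, rfl⟩
    refine ⟨_, _, ⟨σ, rfl⟩, ⟨τ.symm, rfl⟩, ?_⟩
    rw [PEquiv.toMatrix_toPEquiv_mul, PEquiv.mul_toMatrix_toPEquiv, submatrix_submatrix]
    rfl

def finMulCongr {a a' b b' : ℕ} (e : Fin a' ≃ Fin a) (f : Fin b' ≃ Fin b) :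
    Fin (a' * b') ≃ Fin (a * b) :=
  finProdFinEquiv.symm.trans ((e.prodCongr f).trans finProdFinEquiv)

def finMulMulEquiv (x y n : ℕ) : Fin (x * (y * n)) ≃ Fin x × Fin y × Fin n :=
  finProdFinEquiv.symm.trans ((Equiv.refl _).prodCongr finProdFinEquiv.symm)

def finMulLeftComm (x y n : ℕ) : Fin (x * (y * n)) ≃ Fin (y * (x * n)) :=
  (finMulMulEquiv x y n).trans <| (Equiv.prodAssoc _ _ _).symm.trans <|
    ((Equiv.prodComm _ _).prodCongr (Equiv.refl _)).trans <|
      (Equiv.prodAssoc _ _ _).trans (finMulMulEquiv y x n).symm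

lemma kron_submatrix {a a' b b' : ℕ} (A : Matrix (Fin a) (Fin a) ℂ)
    (B : Matrix (Fin b) (Fin b) ℂ) (e : Fin a' ≃ Fin a) (f : Fin b' ≃ Fin b) :
    kron (A.submatrix e e) (B.submatrix f f)
      = (kron A B).submatrix (finMulCongr e f) (finMulCongr e f) := by
  ext i j
  simp only [kron, finMulCongr, of_apply, submatrix_apply, Equiv.trans_apply,
    Equiv.prodCongr_apply, Equiv.symm_apply_apply, Prod.map_fst, Prod.map_snd]

lemma kron_kron_left_comm {x y n : ℕ} (C : Matrix (Fin x) (Fin x) ℂ)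
    (D : Matrix (Fin y) (Fin y) ℂ) (A : Matrix (Fin n) (Fin n) ℂ) :
    kron C (kron D A)
      = (kron D (kron C A)).submatrix (finMulLeftComm x y n) (finMulLeftComm x y n) := by
  ext i j
  simp only [kron, finMulLeftComm, finMulMulEquiv, of_apply, submatrix_apply, Equiv.trans_apply,
    Equiv.prodCongr_apply, Equiv.symm_trans_apply, Equiv.prodCongr_symm, Equiv.symm_symm,
    Equiv.symm_apply_apply, Prod.map_fst, Prod.map_snd, Prod.map_apply, Equiv.refl_symm,
    Equiv.coe_refl, id_eq, Equiv.prodAssoc_symm_apply, Equiv.prodComm_apply, Prod.swap,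
    Equiv.prodAssoc_apply]
  ring

lemma exists_kronFourier_eq_submatrix_of_perm {L M : List ℕ} (h : L.Perm M) :
    ∃ f : Fin M.prod ≃ Fin L.prod, kronFourier M = (kronFourier L).submatrix f f := by
  induction h with
  | nil => exact ⟨Equiv.refl _, rfl⟩
  | @cons x l₁ l₂ _ ih =>
    obtain ⟨f, hf⟩ := ih
    refine ⟨finMulCongr (Equiv.refl _) f, ?_⟩
    have h := kron_submatrix (Fourier x) (kronFourier l₁) (Equiv.refl _) f
    rw [Equiv.coe_refl, submatrix_id_id, ← hf] at h
    exact h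
  | swap x y l => exact ⟨finMulLeftComm x y l.prod, kron_kron_left_comm _ _ _⟩
  | trans _ _ ih₁ ih₂ =>
    obtain ⟨f₁, hf₁⟩ := ih₁
    obtain ⟨f₂, hf₂⟩ := ih₂
    exact ⟨f₂.trans f₁, by rw [hf₂, hf₁, submatrix_submatrix]; rfl⟩

/-- two FFKPs of the same size are permutation equivalent iff their
factor multisets coincide. -/
theorem stmt15 (Ls Ms : List ℕ) (hL : ∀ n ∈ Ls, IsPrimePow n) (hM : ∀ n ∈ Ms, IsPrimePow n)
    (hsize : Ls.prod = Ms.prod) :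
    (∃ P Q : Matrix (Fin Ls.prod) (Fin Ls.prod) ℂ,
      IsPermMatrix P ∧ IsPermMatrix Q ∧
      Matrix.reindex (finCongr hsize.symm) (finCongr hsize.symm) (kronFourier Ms)
        = P * kronFourier Ls * Q) ↔ Ls.Perm Ms := by
  rw [exists_isPermMatrix_mul_mul_iff, reindex_apply]
  constructor
  · rintro ⟨σ, τ, hστ⟩
    refine perm_of_prod_map_gcd_eq hL hM fun m => ?_
    rw [← card_rowsPowEqOne_kronFourier (fun n hn => (hL n hn).pos),
      ← card_rowsPowEqOne_kronFourier (fun n hn => (hM n hn).pos),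
      ← card_rowsPowEqOne_submatrix (kronFourier Ls) σ τ, ← hστ, card_rowsPowEqOne_submatrix,
      hsize]
  · intro hperm
    obtain ⟨f, hf⟩ := exists_kronFourier_eq_submatrix_of_perm hperm
    exact ⟨(finCongr hsize.symm).symm.trans f, (finCongr hsize.symm).symm.trans f,
      by rw [hf, submatrix_submatrix]; rfl⟩
end

section
/- Let U be an n×n unitary matrix, fix indices i, j and target phases α_1,...,α_n (for row i) and β_1,...,β_n (for column j) with α_j = β_i, and assume the entries of U are nonzero. If D_r, D_c are unitary diagonal matrices with [D_c]_{1,1} = 1 such that the entries of D_r U D_c in row i have phases α_1,...,α_n and in column j have phases β_1,...,β_n, then D_r and D_c are uniquely determined. -/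
open Matrix

/-!
Write `D_r = diag r`, `D_c = diag c`, so that `[D_r U D_c]_{kl} = r_k U_{kl} c_l`. Two solutions
agree on row `i`; at the column `l = 0`, where both `c_0 = 1`, this gives `r_i = r'_i`, and then
the whole row gives `c = c'`. Agreement on column `j` now gives `r = r'`, since `c_j = c'_j ≠ 0`.
-/

theorem Matrix.diagonal_mul_mul_diagonal_apply {m n R : Type*} [Fintype m] [Fintype n]
    [DecidableEq m] [DecidableEq n] [NonUnitalNonAssocSemiring R]
    (a : m → R) (M : Matrix m n R) (b : n → R) (k : m) (l : n) :
    (diagonal a * M * diagonal b) k l = a k * M k l * b l := by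
  rw [mul_diagonal, diagonal_mul]

theorem Matrix.diagonal_scaling_eq_of_row_col {m n R : Type*} [Fintype m] [Fintype n]
    [DecidableEq m] [DecidableEq n] [Semiring R] [IsDomain R]
    {M : Matrix m n R} (hM : ∀ k l, M k l ≠ 0) {a a' : m → R} {b b' : n → R}
    (ha : ∀ k, a k ≠ 0) (hb : ∀ l, b l ≠ 0) (i : m) (j l₀ : n) (hb₀ : b l₀ = b' l₀)
    (hrow : ∀ l, (diagonal a * M * diagonal b) i l = (diagonal a' * M * diagonal b') i l)
    (hcol : ∀ k, (diagonal a * M * diagonal b) k j = (diagonal a' * M * diagonal b') k j) :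
    a = a' ∧ b = b' := by
  simp only [diagonal_mul_mul_diagonal_apply] at hrow hcol
  have hai : a i = a' i := by
    have h := hrow l₀
    rw [← hb₀] at h
    exact mul_right_cancel₀ (hM i l₀) (mul_right_cancel₀ (hb l₀) h)
  have hbb : b = b' := funext fun l => by
    have h := hrow l
    rw [← hai] at h
    exact mul_left_cancel₀ (mul_ne_zero (ha i) (hM i l)) h
  refine ⟨funext fun k => ?_, hbb⟩
  have h := hcol k
  rw [← hbb] at h
  exact mul_right_cancel₀ (hM k j) (mul_right_cancel₀ (hb j) h)

theorem stmt16_general (n : ℕ) (hn : 0 < n) (U : Matrix (Fin n) (Fin n) ℂ)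
    (hUnz : ∀ k l, U k l ≠ 0)
    (i j : Fin n) (α β : Fin n → ℝ)
    (Dr Dc Dr' Dc' : Matrix (Fin n) (Fin n) ℂ)
    (hDr : IsUnitaryDiag Dr) (hDc : IsUnitaryDiag Dc)
    (hDr' : IsUnitaryDiag Dr') (hDc' : IsUnitaryDiag Dc')
    (hDc1 : Dc ⟨0, hn⟩ ⟨0, hn⟩ = 1) (hDc1' : Dc' ⟨0, hn⟩ ⟨0, hn⟩ = 1)
    (hrow : ∀ l, (Dr * U * Dc) i l
      = ((‖U i l‖ : ℝ) : ℂ) * Complex.exp ((α l : ℂ) * Complex.I))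
    (hcol : ∀ k, (Dr * U * Dc) k j
      = ((‖U k j‖ : ℝ) : ℂ) * Complex.exp ((β k : ℂ) * Complex.I))
    (hrow' : ∀ l, (Dr' * U * Dc') i l
      = ((‖U i l‖ : ℝ) : ℂ) * Complex.exp ((α l : ℂ) * Complex.I))
    (hcol' : ∀ k, (Dr' * U * Dc') k j
      = ((‖U k j‖ : ℝ) : ℂ) * Complex.exp ((β k : ℂ) * Complex.I)) :
    Dr = Dr' ∧ Dc = Dc' := by
  obtain ⟨r, hr, rfl⟩ := hDr
  obtain ⟨c, hc, rfl⟩ := hDc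
  obtain ⟨r', -, rfl⟩ := hDr'
  obtain ⟨c', -, rfl⟩ := hDc'
  have hc₀ : c ⟨0, hn⟩ = c' ⟨0, hn⟩ := by
    simpa only [diagonal_apply_eq] using hDc1.trans hDc1'.symm
  obtain ⟨rfl, rfl⟩ := diagonal_scaling_eq_of_row_col hUnz
    (fun k => norm_ne_zero_iff.mp (by simp [hr k])) (fun l => norm_ne_zero_iff.mp (by simp [hc l]))
    i j ⟨0, hn⟩ hc₀ (fun l => (hrow l).trans (hrow' l).symm) (fun k => (hcol k).trans (hcol' k).symm)
  exact ⟨rfl, rfl⟩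

/-- uniqueness of the unitary diagonal matrices `D_r, D_c` with
`[D_c]_{1,1} = 1` producing prescribed phases in the `i`-th row and `j`-th column
of `D_r U D_c`, for `U` unitary with nonzero entries. -/
theorem stmt16 (n : ℕ) (hn : 0 < n) (U : Matrix (Fin n) (Fin n) ℂ)
    (hU : U ∈ Matrix.unitaryGroup (Fin n) ℂ) (hUnz : ∀ k l, U k l ≠ 0)
    (i j : Fin n) (α β : Fin n → ℝ) (hαβ : α j = β i)
    (Dr Dc Dr' Dc' : Matrix (Fin n) (Fin n) ℂ)
    (hDr : IsUnitaryDiag Dr) (hDc : IsUnitaryDiag Dc)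
    (hDr' : IsUnitaryDiag Dr') (hDc' : IsUnitaryDiag Dc')
    (hDc1 : Dc ⟨0, hn⟩ ⟨0, hn⟩ = 1) (hDc1' : Dc' ⟨0, hn⟩ ⟨0, hn⟩ = 1)
    (hrow : ∀ l, (Dr * U * Dc) i l
      = ((‖U i l‖ : ℝ) : ℂ) * Complex.exp ((α l : ℂ) * Complex.I))
    (hcol : ∀ k, (Dr * U * Dc) k j
      = ((‖U k j‖ : ℝ) : ℂ) * Complex.exp ((β k : ℂ) * Complex.I))
    (hrow' : ∀ l, (Dr' * U * Dc') i l
      = ((‖U i l‖ : ℝ) : ℂ) * Complex.exp ((α l : ℂ) * Complex.I))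
    (hcol' : ∀ k, (Dr' * U * Dc') k j
      = ((‖U k j‖ : ℝ) : ℂ) * Complex.exp ((β k : ℂ) * Complex.I)) :
    Dr = Dr' ∧ Dc = Dc' :=
  stmt16_general n hn U hUnz i j α β Dr Dc Dr' Dc' hDr hDc hDr' hDc' hDc1 hDc1' hrow hcol hrow'
    hcol'
end

section
/- Let F_n be the n×n Fourier matrix and suppose D_r, D_c are unitary diagonal matrices such that F_n' = D_r F_n D_c has its i-th row and j-th column filled with the constant 1/√n. Then F_n' = P_r F_n P_c where P_r is the cyclic permutation sending row k to row k + (i−1) mod n and P_c the cyclic permutation sending column l to column l + (j−1) mod n. -/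
open Matrix

/-!
Write `ω = exp (2πi/n)`, so that `(D_r F_n D_c)_{kl} = r_k c_l ω^{kl} / √n`. The constant
row `i` and column `j` say `r_i c_l = ω^{-il}` and `r_k c_j = ω^{-kj}`, hence
`r_k c_l = (r_k c_j)(r_i c_l)/(r_i c_j) = ω^{-kj-il+ij}` and the entry is `ω^{(k-i)(l-j)} / √n`,
which is the entry of `F_n` at the shifted position since `ω^n = 1`.
-/

theorem mul_mul_zpow_eq_zpow_sub_mul_sub {K ι κ : Type*} [CommGroupWithZero K] {ω : K}
    (hω : ω ≠ 0) {r : ι → K} {c : κ → K} {a : ι → ℤ} {b : κ → ℤ} {i : ι} {j : κ}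
    (hrow : ∀ l, r i * c l * ω ^ (a i * b l) = 1)
    (hcol : ∀ k, r k * c j * ω ^ (a k * b j) = 1) (k : ι) (l : κ) :
    r k * c l * ω ^ (a k * b l) = ω ^ ((a k - a i) * (b l - b j)) := by
  have hinv : ∀ {x : K} {m : ℤ}, x * ω ^ m = 1 → x = ω ^ (-m) := fun h => by
    rw [_root_.zpow_neg, eq_inv_of_mul_eq_one_left h]
  have hij : r i * c j ≠ 0 := by
    rw [hinv (hcol i)]
    exact zpow_ne_zero _ hω
  apply mul_right_cancel₀ hij
  calc r k * c l * ω ^ (a k * b l) * (r i * c j)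
      = (r k * c j) * (r i * c l) * ω ^ (a k * b l) := by ac_rfl
    _ = ω ^ ((a k - a i) * (b l - b j)) * ω ^ (-(a i * b j)) := by
      rw [hinv (hcol k), hinv (hrow l), ← zpow_add₀ hω, ← zpow_add₀ hω, ← zpow_add₀ hω]
      congr 1
      ring
    _ = ω ^ ((a k - a i) * (b l - b j)) * (r i * c j) := by rw [← hinv (hcol i)]

theorem IsPrimitiveRoot.zpow_eq_zpow_of_modEq {G : Type*} [CommGroupWithZero G] {ζ : G} {k : ℕ}
    (h : IsPrimitiveRoot ζ k) {a b : ℤ} (hab : a ≡ b [ZMOD k]) : ζ ^ a = ζ ^ b := by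
  rcases eq_or_ne k 0 with rfl | hk
  · rw [Int.natCast_zero, Int.modEq_zero_iff] at hab
    rw [hab]
  · have hdvd := (h.zpow_eq_one_iff_dvd (b - a)).mpr hab.dvd
    rw [← add_sub_cancel a b, zpow_add₀ (h.ne_zero hk), hdvd, mul_one]

theorem Int.natCast_add_sub_emod_modEq {n i : ℕ} (k : ℕ) (hi : i ≤ n) :
    (((k + (n - i)) % n : ℕ) : ℤ) ≡ k - i [ZMOD n] := by
  push_cast [Nat.cast_sub hi]
  calc ((k : ℤ) + (n - i)) % n ≡ k + (n - i) [ZMOD n] := Int.mod_modEq _ _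
    _ = (k - i) + n := by ring
    _ ≡ k - i [ZMOD n] := Int.add_modEq_right

noncomputable def fourierRoot (n : ℕ) : ℂ := Complex.exp (2 * Real.pi * Complex.I / n)

theorem isPrimitiveRoot_fourierRoot {n : ℕ} (hn : n ≠ 0) : IsPrimitiveRoot (fourierRoot n) n :=
  Complex.isPrimitiveRoot_exp n hn

theorem Fourier_apply_eq_zpow (n : ℕ) (k l : Fin n) :
    Fourier n k l = ((1 / Real.sqrt n : ℝ) : ℂ) * fourierRoot n ^ ((k : ℤ) * l) := by
  rw [Fourier, of_apply, fourierRoot, ← Complex.exp_int_mul]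
  push_cast
  ring_nf

theorem Fourier_apply_cyclicShift {n : ℕ} (hn : 0 < n) (i j k l : Fin n) :
    Fourier n ⟨(k.val + (n - i.val)) % n, Nat.mod_lt _ hn⟩
        ⟨(l.val + (n - j.val)) % n, Nat.mod_lt _ hn⟩
      = ((1 / Real.sqrt n : ℝ) : ℂ) * fourierRoot n ^ (((k : ℤ) - i) * ((l : ℤ) - j)) := by
  rw [Fourier_apply_eq_zpow]
  congr 1
  exact (isPrimitiveRoot_fourierRoot hn.ne').zpow_eq_zpow_of_modEq
    ((Int.natCast_add_sub_emod_modEq k i.isLt.le).mul (Int.natCast_add_sub_emod_modEq l j.isLt.le))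

/-- if `D_r F_n D_c` has its `i`-th row and `j`-th column filled with
`1/√n`, then it equals `F_n` with rows and columns cyclically shifted by `i` and `j`
(0-based). -/
theorem stmt17 (n : ℕ) (hn : 0 < n) (i j : Fin n)
    (Dr Dc : Matrix (Fin n) (Fin n) ℂ) (hDr : IsUnitaryDiag Dr) (hDc : IsUnitaryDiag Dc)
    (hrow : ∀ l, (Dr * Fourier n * Dc) i l = ((1 / Real.sqrt n : ℝ) : ℂ))
    (hcol : ∀ k, (Dr * Fourier n * Dc) k j = ((1 / Real.sqrt n : ℝ) : ℂ)) :
    ∀ k l, (Dr * Fourier n * Dc) k l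
      = Fourier n ⟨(k.val + (n - i.val)) % n, Nat.mod_lt _ hn⟩
                  ⟨(l.val + (n - j.val)) % n, Nat.mod_lt _ hn⟩ := by
  obtain ⟨r, -, rfl⟩ := hDr
  obtain ⟨c, -, rfl⟩ := hDc
  set s : ℂ := ((1 / Real.sqrt n : ℝ) : ℂ)
  have hs : s ≠ 0 := by simp [s, hn.ne']
  have entry : ∀ k l, (diagonal r * Fourier n * diagonal c) k l
      = s * (r k * c l * fourierRoot n ^ ((k : ℤ) * l)) := fun k l => by
    rw [mul_diagonal, diagonal_mul, Fourier_apply_eq_zpow]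
    ring
  have normalize : ∀ {k l}, (diagonal r * Fourier n * diagonal c) k l = s →
      r k * c l * fourierRoot n ^ ((k : ℤ) * l) = 1 := fun h => by
    rwa [entry, mul_eq_left₀ hs] at h
  intro k l
  rw [entry, Fourier_apply_cyclicShift hn]
  exact congrArg (s * ·) <| mul_mul_zpow_eq_zpow_sub_mul_sub (a := (↑)) (b := (↑))
    ((isPrimitiveRoot_fourierRoot hn.ne').ne_zero hn.ne') (fun l => normalize (hrow l))
    (fun k => normalize (hcol k)) k l
end
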